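/- arXiv:1603.07681 — 9 statements merged into one kernel-verified Lean document; each statement's English description precedes it below -/
import Mathlib

section
/- The measure μ_loc agrees with μ on all σ-finite sets in 𝒜, vanishes on every local null set, and is semi-finite. Moreover, μ is semi-finite if and only if the restriction of μ_loc to 𝒜 equals μ. -/
open MeasureTheory Set ENNReal

/-- A set `B` is locally measurable if `B ∩ A` is measurable for every measurable set `A`
of finite measure. -/
def LocallyMeasurable {Ω : Type*} [MeasurableSpace Ω] (μ : Measure Ω) (B : Set Ω) : Prop :=
  ∀ A : Set Ω, MeasurableSet A → μ A < ∞ → MeasurableSet (B ∩ A)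

/-- A locally measurable set `B` is a local null set if `μ (B ∩ A) = 0` for every
measurable `A` of finite measure. -/
def LocalNull {Ω : Type*} [MeasurableSpace Ω] (μ : Measure Ω) (B : Set Ω) : Prop :=
  LocallyMeasurable μ B ∧ ∀ A : Set Ω, MeasurableSet A → μ A < ∞ → μ (B ∩ A) = 0

/-- `μ_loc B = sup { μ (B ∩ A) : A measurable, μ A < ∞ }`. -/
noncomputable def muLoc {Ω : Type*} [MeasurableSpace Ω] (μ : Measure Ω) (B : Set Ω) : ℝ≥0∞ :=
  ⨆ (A : Set Ω) (_ : MeasurableSet A ∧ μ A < ∞), μ (B ∩ A)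

/-- A measure space is semi-finite if every measurable set of infinite measure contains
a measurable subset of finite positive measure. -/
def SemiFinite {Ω : Type*} [MeasurableSpace Ω] (μ : Measure Ω) : Prop :=
  ∀ B : Set Ω, MeasurableSet B → μ B = ∞ →
    ∃ A : Set Ω, MeasurableSet A ∧ A ⊆ B ∧ 0 < μ A ∧ μ A < ∞

lemma muLoc_le {Ω : Type*} [MeasurableSpace Ω] (μ : Measure Ω) (B : Set Ω) :
    muLoc μ B ≤ μ B :=
  iSup_le fun _ => iSup_le fun _ => measure_mono inter_subset_left

lemma le_muLoc {Ω : Type*} [MeasurableSpace Ω] (μ : Measure Ω) (B A : Set Ω)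
    (hA : MeasurableSet A) (hAfin : μ A < ∞) : μ (B ∩ A) ≤ muLoc μ B :=
  le_iSup_of_le A (le_iSup_of_le ⟨hA, hAfin⟩ le_rfl)

lemma muLoc_countable {Ω : Type*} [MeasurableSpace Ω] (μ : Measure Ω) (B : Set Ω)
    (A : ℕ → Set Ω) (hA : ∀ n, MeasurableSet (A n) ∧ μ (A n) < ∞) :
    μ (B ∩ ⋃ n, A n) ≤ muLoc μ B := by
  set t : ℕ → Set Ω := fun n => ⋃ k ∈ Finset.range (n+1), A k with ht
  have htm : ∀ n, MeasurableSet (t n) :=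
    fun n => (Finset.range (n+1)).measurableSet_biUnion (fun k _ => (hA k).1)
  have htfin : ∀ n, μ (t n) < ∞ := by
    intro n
    calc μ (t n) ≤ ∑ k ∈ Finset.range (n+1), μ (A k) := measure_biUnion_finset_le _ _
      _ < ∞ := ENNReal.sum_lt_top.mpr fun k _ => (hA k).2
  have hUt : (⋃ n, t n) = ⋃ n, A n := by
    apply subset_antisymm
    · exact iUnion_subset fun n => iUnion₂_subset fun k _ => subset_iUnion A k
    · exact iUnion_mono fun n => subset_biUnion_of_mem (Finset.self_mem_range_succ n)
  have hmono : Monotone fun n => B ∩ t n := by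
    intro m n hmn
    exact inter_subset_inter_right _
      (biUnion_subset_biUnion_left (Finset.range_subset_range.mpr (by omega)))
  calc μ (B ∩ ⋃ n, A n) = μ (⋃ n, B ∩ t n) := by rw [← hUt, inter_iUnion]
    _ = ⨆ n, μ (B ∩ t n) := hmono.directed_le.measure_iUnion
    _ ≤ muLoc μ B := iSup_le fun n => le_muLoc μ B (t n) (htm n) (htfin n)

lemma muLoc_eq_top {Ω : Type*} [MeasurableSpace Ω] (μ : Measure Ω) (hsf : SemiFinite μ)
    (B : Set Ω) (hB : MeasurableSet B) (hBtop : μ B = ∞) : muLoc μ B = ∞ := by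
  by_contra hne
  have hc : muLoc μ B < ∞ := lt_top_iff_ne_top.mpr hne
  set c := muLoc μ B with hcdef
  rcases eq_or_ne c 0 with hc0 | hc0
  · obtain ⟨A, hAm, hAB, hA0, hAfin⟩ := hsf B hB hBtop
    have : μ (B ∩ A) ≤ c := le_muLoc μ B A hAm hAfin
    rw [inter_eq_self_of_subset_right hAB, hc0] at this
    exact absurd (le_antisymm this bot_le) hA0.ne'
  · -- choose a sequence approaching the sup
    have hchoice : ∀ n : ℕ, ∃ A : Set Ω, (MeasurableSet A ∧ μ A < ∞) ∧
        c - ((n : ℝ≥0∞) + 1)⁻¹ < μ (B ∩ A) := by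
      intro n
      have hlt : c - ((n : ℝ≥0∞) + 1)⁻¹ < c :=
        ENNReal.sub_lt_self hc.ne hc0 (by simp)
      rw [hcdef] at hlt
      obtain ⟨A, hA⟩ := lt_iSup_iff.mp hlt
      obtain ⟨h1, h2⟩ := lt_iSup_iff.mp hA
      exact ⟨A, h1, h2⟩
    choose A hA hAlt using hchoice
    set T : Set Ω := B ∩ ⋃ n, A n with hTdef
    have hTm : MeasurableSet T := hB.inter (MeasurableSet.iUnion fun n => (hA n).1)
    have hTfin : μ T < ∞ := lt_of_le_of_lt (muLoc_countable μ B A hA) hc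
    have hBT : μ (B \ T) = ∞ := by
      by_contra h
      have h1 : μ B ≤ μ T + μ (B \ T) := by
        refine le_trans (measure_mono ?_) (measure_union_le T (B \ T))
        intro x hx
        by_cases hxT : x ∈ T
        · exact Or.inl hxT
        · exact Or.inr ⟨hx, hxT⟩
      rw [hBtop] at h1
      exact (ENNReal.add_lt_top.mpr ⟨hTfin, lt_top_iff_ne_top.mpr h⟩).ne (top_le_iff.mp h1)
    obtain ⟨D, hDm, hDsub, hD0, hDfin⟩ := hsf (B \ T) (hB.diff hTm) hBT
    obtain ⟨n, hn⟩ := ENNReal.exists_inv_nat_lt hD0.ne'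
    have hinv : ((n : ℝ≥0∞) + 1)⁻¹ < μ D :=
      lt_of_le_of_lt (ENNReal.inv_le_inv.mpr (by simp)) hn
    have hdisj : Disjoint (B ∩ A n) D := by
      refine disjoint_left.mpr fun x hx hxD => ?_
      have : x ∈ T := ⟨hx.1, mem_iUnion.mpr ⟨n, hx.2⟩⟩
      exact (hDsub hxD).2 this
    have hDB : D ⊆ B := fun x hx => (hDsub hx).1
    have hunion : B ∩ (A n ∪ D) = (B ∩ A n) ∪ D := by
      rw [inter_union_distrib_left, inter_eq_self_of_subset_right hDB]
    have hmeas : μ (B ∩ (A n ∪ D)) = μ (B ∩ A n) + μ D := by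
      rw [hunion]
      exact measure_union hdisj hDm
    have hbig : c < μ (B ∩ (A n ∪ D)) := by
      rw [hmeas]
      calc c ≤ c - ((n : ℝ≥0∞) + 1)⁻¹ + ((n : ℝ≥0∞) + 1)⁻¹ := le_tsub_add
        _ < μ (B ∩ A n) + μ D := ENNReal.add_lt_add (hAlt n) hinv
    have : μ (B ∩ (A n ∪ D)) ≤ c :=
      le_muLoc μ B (A n ∪ D) ((hA n).1.union hDm)
        (lt_of_le_of_lt (measure_union_le _ _) (ENNReal.add_lt_top.mpr ⟨(hA n).2, hDfin⟩))
    exact absurd (lt_of_lt_of_le hbig this) (lt_irrefl c)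

/-- `μ_loc` agrees with `μ` on σ-finite measurable sets, vanishes on local null sets,
is semi-finite, and `μ` is semi-finite iff `μ_loc` restricted to the original σ-algebra
equals `μ`. -/
theorem muLoc_properties {Ω : Type*} [MeasurableSpace Ω] (μ : Measure Ω) :
    (∀ B : Set Ω, MeasurableSet B →
      (∃ s : ℕ → Set Ω, (∀ n, MeasurableSet (s n) ∧ μ (s n) < ∞) ∧ B ⊆ ⋃ n, s n) →
      muLoc μ B = μ B) ∧
    (∀ B : Set Ω, LocalNull μ B → muLoc μ B = 0) ∧
    (∀ B : Set Ω, LocallyMeasurable μ B → muLoc μ B = ∞ →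
      ∃ C : Set Ω, LocallyMeasurable μ C ∧ C ⊆ B ∧ 0 < muLoc μ C ∧ muLoc μ C < ∞) ∧
    (SemiFinite μ ↔ ∀ B : Set Ω, MeasurableSet B → muLoc μ B = μ B) := by
  refine ⟨?_, ?_, ?_, ?_⟩
  · rintro B _ ⟨s, hs, hcov⟩
    refine le_antisymm (muLoc_le μ B) ?_
    have : μ B = μ (B ∩ ⋃ n, s n) := by
      rw [inter_eq_self_of_subset_left hcov]
    rw [this]
    exact muLoc_countable μ B s hs
  · rintro B ⟨-, hnull⟩
    refine le_antisymm ?_ bot_le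
    exact iSup_le fun A => iSup_le fun hA => le_of_eq (hnull A hA.1 hA.2)
  · intro B hB htop
    have h0 : (0 : ℝ≥0∞) < muLoc μ B := by rw [htop]; exact ENNReal.zero_lt_top
    rw [muLoc] at h0
    obtain ⟨A, hA⟩ := lt_iSup_iff.mp h0
    obtain ⟨⟨hAm, hAfin⟩, hpos⟩ := lt_iSup_iff.mp hA
    refine ⟨B ∩ A, ?_, inter_subset_left, ?_, ?_⟩
    · intro A' hA' hA'fin
      have : B ∩ A ∩ A' = B ∩ (A ∩ A') := by rw [inter_assoc]
      rw [this]
      exact hB (A ∩ A') (hAm.inter hA')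
        (lt_of_le_of_lt (measure_mono inter_subset_left) hAfin)
    · refine lt_of_lt_of_le hpos ?_
      have : B ∩ A ∩ A = B ∩ A := by rw [inter_assoc, inter_self]
      calc μ (B ∩ A) = μ (B ∩ A ∩ A) := by rw [this]
        _ ≤ muLoc μ (B ∩ A) := le_muLoc μ (B ∩ A) A hAm hAfin
    · exact lt_of_le_of_lt (muLoc_le μ (B ∩ A))
        (lt_of_le_of_lt (measure_mono inter_subset_right) hAfin)
  · constructor
    · intro hsf B hB
      rcases eq_or_ne (μ B) ∞ with htop | hfin
      · rw [htop]; exact muLoc_eq_top μ hsf B hB htop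
      · refine le_antisymm (muLoc_le μ B) ?_
        calc μ B = μ (B ∩ B) := by rw [inter_self]
          _ ≤ muLoc μ B := le_muLoc μ B B hB (lt_top_iff_ne_top.mpr hfin)
    · intro h B hB hBtop
      have h0 : (0 : ℝ≥0∞) < muLoc μ B := by
        rw [h B hB, hBtop]; exact ENNReal.zero_lt_top
      rw [muLoc] at h0
      obtain ⟨A, hA⟩ := lt_iSup_iff.mp h0
      obtain ⟨⟨hAm, hAfin⟩, hpos⟩ := lt_iSup_iff.mp hA
      exact ⟨B ∩ A, hB.inter hAm, inter_subset_left, hpos,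
        lt_of_le_of_lt (measure_mono inter_subset_right) hAfin⟩
end

section
/- Every locally measurable set A of finite μ_loc-measure can be written as a disjoint union A = A' ∪ A'', where A' ∈ 𝒜 has finite μ-measure and A'' is a local null set. Consequently, every locally measurable σ-finite set is the union of a σ-finite set in 𝒜 and a local null set. -/
open MeasureTheory Set ENNReal

/-!
Pick test sets `Cₙ` of finite measure with `μ (A ∩ Cₙ) → μ_loc A`. Then `A' := A ∩ ⋃ Cₙ` is
measurable with `μ A' = μ_loc A`. For any test set `D`, `A' ∪ D` is again a test set, so
`μ A' + μ ((A \ A') ∩ D) ≤ μ_loc A = μ A'`, and finiteness of `μ A'` forces `A \ A'` to be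
locally null. In the σ-finite case one decomposes each `A ∩ sₙ` and uses that countable unions
of local null sets are local null.
-/

open Filter Topology

section

variable {Ω : Type*} [MeasurableSpace Ω] {μ : Measure Ω} {A B E : Set Ω}

theorem measure_inter_le_muLoc (hB : MeasurableSet B) (hμB : μ B < ∞) :
    μ (A ∩ B) ≤ muLoc μ A :=
  le_iSup₂ (f := fun C (_ : MeasurableSet C ∧ μ C < ∞) => μ (A ∩ C)) B ⟨hB, hμB⟩

theorem muLoc_mono (h : A ⊆ B) : muLoc μ A ≤ muLoc μ B :=
  iSup₂_mono fun _ _ => measure_mono (inter_subset_inter_left _ h)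

theorem exists_seq_tendsto_muLoc (μ : Measure Ω) (A : Set Ω) :
    ∃ C : ℕ → Set Ω, (∀ n, MeasurableSet (C n) ∧ μ (C n) < ∞) ∧
      Tendsto (fun n => μ (A ∩ C n)) atTop (𝓝 (muLoc μ A)) := by
  obtain ⟨u, -, -, hu_lim, hu_mem⟩ :=
    (isLUB_biSup (s := {C : Set Ω | MeasurableSet C ∧ μ C < ∞}) (f := fun C => μ (A ∩ C))
      ).exists_seq_monotone_tendsto ⟨_, ∅, ⟨.empty, by simp⟩, rfl⟩
  choose C hC hCu using hu_mem
  refine ⟨C, hC, ?_⟩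
  rwa [show (fun n => μ (A ∩ C n)) = u from funext hCu]

namespace LocallyMeasurable

theorem inter (hA : LocallyMeasurable μ A) (hB : LocallyMeasurable μ B) :
    LocallyMeasurable μ (A ∩ B) := fun C hC hμC => by
  rw [inter_inter_distrib_right]
  exact (hA C hC hμC).inter (hB C hC hμC)

theorem diff_measurableSet (hA : LocallyMeasurable μ A) (hE : MeasurableSet E) :
    LocallyMeasurable μ (A \ E) := fun C hC hμC => by
  rw [← inter_sdiff_right_comm]
  exact (hA C hC hμC).diff hE

theorem exists_measurableSet_subset_measure_eq_muLoc (hA : LocallyMeasurable μ A) :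
    ∃ E ⊆ A, MeasurableSet E ∧ μ E = muLoc μ A := by
  obtain ⟨C, hC, hlim⟩ := exists_seq_tendsto_muLoc μ A
  have hacc : ∀ n, MeasurableSet (accumulate C n) ∧ μ (accumulate C n) < ∞ := fun n =>
    ⟨.biUnion (to_countable _) fun i _ => (hC i).1,
      measure_biUnion_lt_top (finite_Iic n) fun i _ => (hC i).2⟩
  have hE : A ∩ ⋃ n, C n = ⋃ n, A ∩ accumulate C n := by
    rw [← iUnion_accumulate, inter_iUnion]
  refine ⟨A ∩ ⋃ n, C n, inter_subset_left, ?_, le_antisymm ?_ ?_⟩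
  · rw [hE]
    exact .iUnion fun n => hA _ (hacc n).1 (hacc n).2
  · rw [hE, (monotone_const.inter monotone_accumulate).measure_iUnion]
    exact iSup_le fun n => measure_inter_le_muLoc (hacc n).1 (hacc n).2
  · exact le_of_tendsto' hlim fun n =>
      measure_mono (inter_subset_inter_right _ (subset_iUnion C n))

theorem localNull_diff (hA : LocallyMeasurable μ A) (hEA : E ⊆ A) (hE : MeasurableSet E)
    (hμE : μ E < ∞) (hle : muLoc μ A ≤ μ E) : LocalNull μ (A \ E) := by
  refine ⟨hA.diff_measurableSet hE, fun D hD hμD => ?_⟩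
  have hsum : μ E + μ ((A \ E) ∩ D) ≤ μ E + 0 :=
    calc μ E + μ ((A \ E) ∩ D) = μ (E ∪ (A \ E) ∩ D) :=
          (measure_union (disjoint_sdiff_right.mono_right inter_subset_left)
            (hA.diff_measurableSet hE D hD hμD)).symm
      _ ≤ μ (A ∩ (E ∪ D)) := measure_mono <| union_subset
          (subset_inter hEA subset_union_left) (inter_subset_inter sdiff_subset subset_union_right)
      _ ≤ muLoc μ A := measure_inter_le_muLoc (hE.union hD) (measure_union_lt_top hμE hμD)
      _ ≤ μ E + 0 := by rwa [add_zero]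
  exact nonpos_iff_eq_zero.1 ((ENNReal.add_le_add_iff_left hμE.ne).1 hsum)

theorem exists_eq_union_localNull_of_muLoc_lt_top (hA : LocallyMeasurable μ A)
    (hfin : muLoc μ A < ∞) :
    ∃ A' A'' : Set Ω, MeasurableSet A' ∧ μ A' < ∞ ∧ LocalNull μ A'' ∧
      A = A' ∪ A'' ∧ Disjoint A' A'' := by
  obtain ⟨E, hEA, hE, hμE⟩ := hA.exists_measurableSet_subset_measure_eq_muLoc
  have hμE_lt : μ E < ∞ := hμE ▸ hfin
  exact ⟨E, A \ E, hE, hμE_lt, hA.localNull_diff hEA hE hμE_lt hμE.ge,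
    (union_sdiff_cancel hEA).symm, disjoint_sdiff_right⟩

end LocallyMeasurable

theorem LocalNull.iUnion {ι : Type*} [Countable ι] {s : ι → Set Ω} (hs : ∀ i, LocalNull μ (s i)) :
    LocalNull μ (⋃ i, s i) := by
  refine ⟨fun D hD hμD => ?_, fun D hD hμD => ?_⟩ <;> rw [iUnion_inter]
  · exact .iUnion fun i => (hs i).1 D hD hμD
  · exact measure_iUnion_null fun i => (hs i).2 D hD hμD

theorem LocallyMeasurable.exists_eq_union_localNull_of_subset_iUnion
    (hA : LocallyMeasurable μ A) {s : ℕ → Set Ω}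
    (hs : ∀ n, LocallyMeasurable μ (s n) ∧ muLoc μ (s n) < ∞) (hAs : A ⊆ ⋃ n, s n) :
    ∃ A' A'' : Set Ω, MeasurableSet A' ∧
      (∃ t : ℕ → Set Ω, (∀ n, MeasurableSet (t n) ∧ μ (t n) < ∞) ∧ A' ⊆ ⋃ n, t n) ∧
      LocalNull μ A'' ∧ A = A' ∪ A'' := by
  choose A' A'' hA' hμA' hA'' hAeq _ using fun n =>
    (hA.inter (hs n).1).exists_eq_union_localNull_of_muLoc_lt_top
      ((muLoc_mono inter_subset_right).trans_lt (hs n).2)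
  refine ⟨⋃ n, A' n, ⋃ n, A'' n, .iUnion hA', ⟨A', fun n => ⟨hA' n, hμA' n⟩, subset_rfl⟩,
    LocalNull.iUnion hA'', ?_⟩
  calc A = ⋃ n, A ∩ s n := by rw [← inter_iUnion, inter_eq_left.2 hAs]
    _ = ⋃ n, (A' n ∪ A'' n) := iUnion_congr hAeq
    _ = (⋃ n, A' n) ∪ ⋃ n, A'' n := iUnion_union_distrib _ _

end

/-- Every locally measurable set of finite `μ_loc`-measure is the disjoint union of a
measurable set of finite `μ`-measure and a local null set; consequently every locally
measurable set that is σ-finite for `μ_loc` is the union of a σ-finite measurable set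
and a local null set. -/
theorem locallyMeasurable_decomposition {Ω : Type*} [MeasurableSpace Ω] (μ : Measure Ω) :
    (∀ A : Set Ω, LocallyMeasurable μ A → muLoc μ A < ∞ →
      ∃ A' A'' : Set Ω, MeasurableSet A' ∧ μ A' < ∞ ∧ LocalNull μ A'' ∧
        A = A' ∪ A'' ∧ Disjoint A' A'') ∧
    (∀ A : Set Ω, LocallyMeasurable μ A →
      (∃ s : ℕ → Set Ω, (∀ n, LocallyMeasurable μ (s n) ∧ muLoc μ (s n) < ∞) ∧
        A ⊆ ⋃ n, s n) →
      ∃ A' A'' : Set Ω, MeasurableSet A' ∧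
        (∃ s : ℕ → Set Ω, (∀ n, MeasurableSet (s n) ∧ μ (s n) < ∞) ∧ A' ⊆ ⋃ n, s n) ∧
        LocalNull μ A'' ∧ A = A' ∪ A'') :=
  ⟨fun _ hA hfin => hA.exists_eq_union_localNull_of_muLoc_lt_top hfin,
    fun _ hA ⟨_, hs, hAs⟩ => hA.exists_eq_union_localNull_of_subset_iUnion hs hAs⟩
end

section
/- If a measure space (Ω, 𝒜, μ) is locally determined and weakly localisable, then it is localisable. -/
open MeasureTheory Set ENNReal

/-- A measure space is localisable if it is semi-finite and every family of measurable
sets has an essential supremum: a smallest measurable set (up to null sets) containing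
each member of the family up to null sets. -/
def Localisable {Ω : Type*} [MeasurableSpace Ω] (μ : Measure Ω) : Prop :=
  SemiFinite μ ∧
  ∀ E : Set (Set Ω), (∀ B ∈ E, MeasurableSet B) →
    ∃ S : Set Ω, MeasurableSet S ∧ (∀ B ∈ E, μ (B \ S) = 0) ∧
      ∀ C : Set Ω, MeasurableSet C → (∀ B ∈ E, μ (B \ C) = 0) → μ (S \ C) = 0

/-- A measure space is weakly localisable if every consistent family of measurable
functions `f_A : A → ℝ`, indexed by the measurable sets `A` of finite measure, is
realised `μ`-a.e. on each `A` by a single locally measurable function. -/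
def WeaklyLocalisable {Ω : Type*} [MeasurableSpace Ω] (μ : Measure Ω) : Prop :=
  ∀ f : Set Ω → Ω → ℝ,
    (∀ A : Set Ω, MeasurableSet A → μ A < ∞ → Measurable (A.indicator (f A))) →
    (∀ A B : Set Ω, MeasurableSet A → μ A < ∞ → MeasurableSet B → μ B < ∞ →
      ∀ᵐ x ∂(μ.restrict (A ∩ B)), f A x = f B x) →
    ∃ g : Ω → ℝ, (∀ A : Set Ω, MeasurableSet A → μ A < ∞ → Measurable (A.indicator g)) ∧
      ∀ A : Set Ω, MeasurableSet A → μ A < ∞ → ∀ᵐ x ∂(μ.restrict A), g x = f A x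

/-- A measure space is locally determined if it is semi-finite and every locally
measurable set is measurable. -/
def LocallyDetermined {Ω : Type*} [MeasurableSpace Ω] (μ : Measure Ω) : Prop :=
  SemiFinite μ ∧ ∀ B : Set Ω, LocallyMeasurable μ B → MeasurableSet B

/-!
On a set `A` of finite measure the restricted measure is finite, so every family `E` has an
essential supremum `T A` there (a countable subfamily already exhausts it). Essential suprema are
unique up to null sets and compatible with restriction, so the indicators of the `T A` form a
consistent family; weak localisability glues them to a locally measurable `g`. Local determinacy
makes `{g ≠ 0}` measurable, it is an essential supremum of `E` on every set of finite measure,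
and semi-finiteness upgrades this to an essential supremum for `μ` itself.
-/

section

variable {Ω : Type*} [MeasurableSpace Ω]

def IsEssSup (μ : Measure Ω) (E : Set (Set Ω)) (S : Set Ω) : Prop :=
  MeasurableSet S ∧ (∀ B ∈ E, μ (B \ S) = 0) ∧
    ∀ C : Set Ω, MeasurableSet C → (∀ B ∈ E, μ (B \ C) = 0) → μ (S \ C) = 0

namespace IsEssSup

variable {μ : Measure Ω} {E : Set (Set Ω)} {S S' : Set Ω}

theorem ae_eq (h : IsEssSup μ E S) (h' : IsEssSup μ E S') : S =ᵐ[μ] S' :=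
  ae_eq_set.2 ⟨h.2.2 S' h'.1 h'.2.1, h'.2.2 S h.1 h.2.1⟩

theorem congr_ae (h : IsEssSup μ E S) (hS' : MeasurableSet S') (hSS' : S =ᵐ[μ] S') :
    IsEssSup μ E S' := by
  refine ⟨hS', fun B hB => ?_, fun C hC hBC => ?_⟩
  · rw [measure_congr ((ae_eq_refl B).diff hSS'.symm)]
    exact h.2.1 B hB
  · rw [measure_congr (hSS'.symm.diff (ae_eq_refl C))]
    exact h.2.2 C hC hBC

theorem restrict (h : IsEssSup μ E S) {A : Set Ω} (hA : MeasurableSet A) :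
    IsEssSup (μ.restrict A) E S := by
  have hdiff (X C : Set Ω) : X \ C ∩ A = X \ (C ∪ Aᶜ) := by
    ext x; simp [and_assoc]
  refine ⟨h.1, fun B hB => Measure.absolutelyContinuous_of_le Measure.restrict_le_self
    (h.2.1 B hB), fun C hC hBC => ?_⟩
  -- Outside `A` nothing is required, so `C ∪ Aᶜ` is an upper bound for `μ`.
  rw [Measure.restrict_apply' hA, hdiff]
  refine h.2.2 _ (hC.union hA.compl) fun B hB => ?_
  rw [← hdiff, ← Measure.restrict_apply' hA]
  exact hBC B hB

theorem ae_eq_restrict_inter {A B : Set Ω} (hA : IsEssSup (μ.restrict A) E S)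
    (hB : IsEssSup (μ.restrict B) E S') (hAB : MeasurableSet (A ∩ B)) :
    S =ᵐ[μ.restrict (A ∩ B)] S' := by
  refine IsEssSup.ae_eq (E := E) ?_ ?_
  · rw [← Measure.restrict_restrict_of_subset inter_subset_left]
    exact hA.restrict hAB
  · rw [← Measure.restrict_restrict_of_subset inter_subset_right]
    exact hB.restrict hAB

end IsEssSup

theorem exists_isEssSup (μ : Measure Ω) [SFinite μ] {E : Set (Set Ω)}
    (hE : ∀ B ∈ E, MeasurableSet B) : ∃ S, IsEssSup μ E S := by
  obtain ⟨D, hDE, hD, hDae⟩ := Measure.exists_ae_subset_biUnion_countable μ hE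
  refine ⟨⋃₀ D, .sUnion hD fun B hB => hE B (hDE hB), fun B hB => ae_le_set.1 (hDae B hB),
    fun C _ hBC => measure_mono_null ?_
      ((measure_biUnion_null_iff hD).2 fun B hB => hBC B (hDE hB))⟩
  rintro x ⟨⟨B, hB, hxB⟩, hxC⟩
  exact mem_biUnion hB ⟨hxB, hxC⟩

theorem SemiFinite.measure_eq_zero_of_forall_inter {μ : Measure Ω} (hμ : SemiFinite μ)
    {X : Set Ω} (hX : MeasurableSet X)
    (h : ∀ A : Set Ω, MeasurableSet A → μ A < ∞ → μ (X ∩ A) = 0) : μ X = 0 := by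
  by_cases hXtop : μ X = ∞
  · obtain ⟨A, hA, hAX, hApos, hAfin⟩ := hμ X hX hXtop
    rw [← inter_eq_right.2 hAX, h A hA hAfin] at hApos
    exact absurd hApos (lt_irrefl 0)
  · simpa using h X hX (lt_top_iff_ne_top.2 hXtop)

theorem SemiFinite.isEssSup_of_forall_restrict {μ : Measure Ω} (hμ : SemiFinite μ)
    {E : Set (Set Ω)} (hE : ∀ B ∈ E, MeasurableSet B) {S : Set Ω} (hS : MeasurableSet S)
    (h : ∀ A : Set Ω, MeasurableSet A → μ A < ∞ → IsEssSup (μ.restrict A) E S) :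
    IsEssSup μ E S := by
  refine ⟨hS, fun B hB =>
    hμ.measure_eq_zero_of_forall_inter ((hE B hB).diff hS) fun A hA hAfin => ?_,
    fun C hC hBC => hμ.measure_eq_zero_of_forall_inter (hS.diff hC) fun A hA hAfin => ?_⟩
  · rw [← Measure.restrict_apply' hA]
    exact (h A hA hAfin).2.1 B hB
  · rw [← Measure.restrict_apply' hA]
    exact (h A hA hAfin).2.2 C hC fun B hB =>
      Measure.absolutelyContinuous_of_le Measure.restrict_le_self (hBC B hB)

theorem locallyMeasurable_setOf_ne_zero {μ : Measure Ω} {M : Type*} [Zero M] [MeasurableSpace M]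
    [MeasurableSingletonClass M] {g : Ω → M}
    (hg : ∀ A : Set Ω, MeasurableSet A → μ A < ∞ → Measurable (A.indicator g)) :
    LocallyMeasurable μ {x | g x ≠ 0} := by
  intro A hA hAfin
  convert hg A hA hAfin (measurableSet_singleton 0).compl using 1
  ext x
  by_cases hx : x ∈ A <;> simp [hx]

theorem setOf_ne_zero_ae_eq_of_ae_eq_indicator {μ : Measure Ω} {M : Type*} [Zero M] [One M]
    [NeZero (1 : M)] {g : Ω → M} {T : Set Ω} (h : g =ᵐ[μ] T.indicator 1) :
    {x | g x ≠ 0} =ᵐ[μ] T := by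
  filter_upwards [h] with x hx
  change (g x ≠ 0) = (x ∈ T)
  by_cases hxT : x ∈ T <;> simp [hx, hxT]

end

/-- A locally determined, weakly localisable measure space is localisable. -/
theorem localisable_of_locallyDetermined_weaklyLocalisable
    {Ω : Type*} [MeasurableSpace Ω] (μ : Measure Ω)
    (hld : LocallyDetermined μ) (hwl : WeaklyLocalisable μ) : Localisable μ := by
  refine ⟨hld.1, fun E hE => ?_⟩
  have hexists (A : Set Ω) (hA : μ A < ∞) : ∃ T, IsEssSup (μ.restrict A) E T :=
    have : IsFiniteMeasure (μ.restrict A) := isFiniteMeasure_restrict.2 hA.ne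
    exists_isEssSup _ hE
  choose! T hT using hexists
  obtain ⟨g, hg_meas, hg⟩ := hwl (fun A => (T A).indicator 1)
    (fun A hA hAfin => (measurable_const.indicator (hT A hAfin).1).indicator hA)
    fun A B hA hAfin hB hBfin => indicator_ae_eq_of_ae_eq_set
      ((hT A hAfin).ae_eq_restrict_inter (hT B hBfin) (hA.inter hB))
  have hS : MeasurableSet {x | g x ≠ 0} := hld.2 _ (locallyMeasurable_setOf_ne_zero hg_meas)
  exact ⟨_, hld.1.isEssSup_of_forall_restrict hE hS fun A hA hAfin =>
    (hT A hAfin).congr_ae hS (setOf_ne_zero_ae_eq_of_ae_eq_indicator (hg A hA hAfin)).symm⟩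
end

section
/- Let P be a bounded linear projection on L_p(μ), 1 ≤ p < ∞, with 0 ≤ P ≤ I (in the order sense). If μ is a finite measure, then there exists a measurable set Ω₀ ⊆ Ω such that Pf = 1_{Ω₀} · f for all f ∈ L_p(μ). -/
open MeasureTheory Set ENNReal

/-- If `μ` is a finite measure and `P` is a bounded linear projection on `L_p(μ)`
(`1 ≤ p < ∞`) with `0 ≤ P ≤ I` in the order sense, then `P` is multiplication by the
indicator function of a measurable set `Ω₀`. -/
theorem bandProjection_is_indicator_of_finite {Ω : Type*} [MeasurableSpace Ω]
    (μ : Measure Ω) [IsFiniteMeasure μ] (p : ℝ≥0∞) [Fact (1 ≤ p)] (hp' : p ≠ ∞)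
    (P : Lp ℝ p μ →L[ℝ] Lp ℝ p μ)
    (hproj : ∀ f : Lp ℝ p μ, P (P f) = P f)
    (hord : ∀ f : Lp ℝ p μ, 0 ≤ f → 0 ≤ P f ∧ P f ≤ f) :
    ∃ Ω₀ : Set Ω, MeasurableSet Ω₀ ∧
      ∀ f : Lp ℝ p μ, (P f : Ω → ℝ) =ᵐ[μ] fun x => Ω₀.indicator (f : Ω → ℝ) x := by
  classical
  -- P is monotone
  have mono : ∀ f g : Lp ℝ p μ, f ≤ g → P f ≤ P g := by
    intro f g h
    have h1 := (hord (g - f) (sub_nonneg.mpr h)).1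
    rw [map_sub] at h1
    exact sub_nonneg.mp h1
  -- key disjointness: for f, g ≥ 0, P f ⊓ (g - P g) = 0
  have disj : ∀ f g : Lp ℝ p μ, 0 ≤ f → 0 ≤ g → (P f) ⊓ (g - P g) = 0 := by
    intro f g hf hg
    set h := (P f) ⊓ (g - P g) with hh
    have h0 : 0 ≤ h := le_inf (hord f hf).1 (sub_nonneg.mpr (hord g hg).2)
    have Ph_le : P h ≤ P g - P (P g) := by
      have := mono _ _ (inf_le_right : h ≤ g - P g)
      rwa [map_sub] at this
    rw [hproj g, sub_self] at Ph_le
    have Ph0 : P h = 0 := le_antisymm Ph_le (hord h h0).1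
    have h2 : P (P f - h) ≤ P f - h :=
      (hord _ (sub_nonneg.mpr (inf_le_left : h ≤ P f))).2
    rw [map_sub, hproj f, Ph0, sub_zero] at h2
    exact le_antisymm ((le_sub_self_iff _).mp h2) h0
  -- the constant function 1
  set one : Lp ℝ p μ := MeasureTheory.Lp.const p μ (1 : ℝ) with hone_def
  have hone : (0 : Lp ℝ p μ) ≤ one := by
    rw [← MeasureTheory.Lp.coeFn_nonneg]
    filter_upwards [MeasureTheory.Lp.coeFn_const p μ (1 : ℝ)] with x hx
    rw [Pi.zero_apply, hx]; exact zero_le_one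
  set u : Lp ℝ p μ := P one with hu_def
  -- measurable representative of u
  have hu_meas := MeasureTheory.Lp.aestronglyMeasurable u
  set G : Ω → ℝ := hu_meas.mk u with hG_def
  have hG : (u : Ω → ℝ) =ᵐ[μ] G := hu_meas.ae_eq_mk
  have hGm : Measurable G := hu_meas.stronglyMeasurable_mk.measurable
  refine ⟨G ⁻¹' {1}, hGm (measurableSet_singleton 1), ?_⟩
  -- a.e., G x = 0 or G x = 1
  have hu01 : ∀ᵐ x ∂μ, G x = 0 ∨ G x = 1 := by
    have e0 : u ⊓ (one - u) = 0 := disj one one hone hone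
    have c0 : ⇑(u ⊓ (one - u)) =ᵐ[μ] (0 : Ω → ℝ) := by
      rw [e0]; exact MeasureTheory.Lp.coeFn_zero ℝ p μ
    filter_upwards [c0, MeasureTheory.Lp.coeFn_inf u (one - u),
      MeasureTheory.Lp.coeFn_sub one u, MeasureTheory.Lp.coeFn_const p μ (1 : ℝ),
      hG] with x h1 h2 h3 h4 h5
    rw [h2] at h1
    simp only [Pi.inf_apply] at h1
    rw [h3] at h1
    simp only [Pi.sub_apply] at h1
    rw [h4, h5, Pi.zero_apply] at h1
    rcases min_eq_iff.mp h1 with ⟨ha, _⟩ | ⟨hb, _⟩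
    · exact Or.inl ha
    · right
      have : (1 : ℝ) - G x = 0 := hb
      linarith
  -- the main statement for nonnegative f
  have pos_case : ∀ f : Lp ℝ p μ, 0 ≤ f →
      (P f : Ω → ℝ) =ᵐ[μ] fun x => (G ⁻¹' {1}).indicator (f : Ω → ℝ) x := by
    intro f hf
    have e1 : P f ⊓ (one - u) = 0 := disj f one hf hone
    have e2 : u ⊓ (f - P f) = 0 := disj one f hone hf
    have c1 : ⇑(P f ⊓ (one - u)) =ᵐ[μ] (0 : Ω → ℝ) := by
      rw [e1]; exact MeasureTheory.Lp.coeFn_zero ℝ p μ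
    have c2 : ⇑(u ⊓ (f - P f)) =ᵐ[μ] (0 : Ω → ℝ) := by
      rw [e2]; exact MeasureTheory.Lp.coeFn_zero ℝ p μ
    filter_upwards [c1, c2, MeasureTheory.Lp.coeFn_inf (P f) (one - u),
      MeasureTheory.Lp.coeFn_inf u (f - P f),
      MeasureTheory.Lp.coeFn_sub one u, MeasureTheory.Lp.coeFn_sub f (P f),
      MeasureTheory.Lp.coeFn_const p μ (1 : ℝ), hG, hu01]
      with x h1 h2 h3 h4 h5 h6 h7 h8 h11
    rw [h3] at h1
    rw [h4] at h2
    simp only [Pi.inf_apply] at h1 h2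
    rw [h5] at h1
    rw [h6] at h2
    simp only [Pi.sub_apply, Pi.zero_apply] at h1 h2
    rw [h7, h8] at h1
    rw [h8] at h2
    simp only [Set.indicator_apply, Set.mem_preimage, Set.mem_singleton_iff]
    rcases h11 with hG0 | hG1
    · rw [if_neg (show ¬ G x = 1 by simp [hG0])]
      rw [hG0] at h1
      rcases min_eq_iff.mp h1 with ⟨ha, _⟩ | ⟨hb, _⟩
      · exact ha
      · norm_num at hb
    · rw [if_pos hG1]
      rw [hG1] at h2
      rcases min_eq_iff.mp h2 with ⟨ha, _⟩ | ⟨hb, _⟩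
      · exfalso; linarith
      · linarith
  -- the general case via positive and negative parts
  intro f
  have hplus := pos_case (f⁺) (posPart_nonneg f)
  have hminus := pos_case (f⁻) (negPart_nonneg f)
  have hPdec : P f = P (f⁺) - P (f⁻) := by rw [← map_sub, posPart_sub_negPart]
  have hfd : ⇑(f⁺ - f⁻ : Lp ℝ p μ) =ᵐ[μ] ⇑f := by rw [posPart_sub_negPart]
  have h5' : ⇑(P f) =ᵐ[μ] ⇑(P (f⁺)) - ⇑(P (f⁻)) := by
    rw [hPdec]; exact MeasureTheory.Lp.coeFn_sub _ _
  filter_upwards [hplus, hminus, hfd, MeasureTheory.Lp.coeFn_sub (f⁺) (f⁻), h5']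
    with x h1 h2 h3 h4 h5
  rw [h5, Pi.sub_apply, h1, h2]
  by_cases hx : x ∈ G ⁻¹' {1}
  · rw [Set.indicator_of_mem hx, Set.indicator_of_mem hx, Set.indicator_of_mem hx]
    rw [h4, Pi.sub_apply] at h3
    exact h3
  · rw [Set.indicator_of_notMem hx, Set.indicator_of_notMem hx,
      Set.indicator_of_notMem hx, sub_zero]
end

section
/- Let h : Ω → ℝ be locally measurable and suppose the multiplication operator f ↦ h·f is a band projection P on L_p(μ). Then the set Ω \ ([h = 0] ∪ [h = 1]) is a local null set, P is multiplication by the indicator of Ω₀ := [h = 1], and the band M = ran(P) equals {f ∈ L_p(μ) : f = 0 μ-a.e. on Ω \ Ω₀}. -/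
/-!
Testing idempotence of `f ↦ h f` on the indicator of a set `A` of finite measure gives
`h² = h` a.e. on `A`, so `h ∈ {0, 1}` off a local null set. A function `f` in `L_p` with
`p < ∞` vanishes off the countable union of its level sets `{‖f‖ ≥ 1/n}`, which have finite
measure by Chebyshev's inequality, so it vanishes a.e. on every local null set; hence `h f = 1_{[h = 1]} f` a.e., and the range is read off from this formula.
-/

open MeasureTheory Set ENNReal

/-- A function `h : Ω → ℝ` is locally measurable if `1_A · h` is measurable for every
measurable set `A` of finite measure. -/
def LocallyMeasurableFun {Ω : Type*} [MeasurableSpace Ω] (μ : Measure Ω) (h : Ω → ℝ) : Prop :=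
  ∀ A : Set Ω, MeasurableSet A → μ A < ∞ → Measurable (A.indicator h)

open Filter

section

variable {Ω : Type*} [MeasurableSpace Ω]

def LocallyNull (μ : Measure Ω) (S : Set Ω) : Prop :=
  ∀ A : Set Ω, MeasurableSet A → μ A < ∞ → μ (S ∩ A) = 0

variable {μ : Measure Ω}

theorem LocallyNull.ae_eq_zero_of_memLp {E : Type*} [NormedAddCommGroup E] {S : Set Ω}
    {f : Ω → E} {p : ℝ≥0∞} (hS : LocallyNull μ S) (hf : MemLp f p μ) (hp0 : p ≠ 0)
    (hp : p ≠ ∞) : ∀ᵐ x ∂μ, x ∈ S → f x = 0 := by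
  obtain ⟨g, hg_meas, hfg⟩ := hf.1
  have hg : MemLp g p μ := hf.ae_eq hfg
  have hlevel : ∀ n : ℕ, μ (S ∩ {x | (n : ℝ≥0∞)⁻¹ ≤ ‖g x‖₊}) = 0 := fun n =>
    hS _ (measurableSet_le measurable_const hg_meas.nnnorm.measurable.coe_nnreal_ennreal)
      (hg.meas_ge_lt_top' hp0 hp (by simp))
  have hS_g : ∀ᵐ x ∂μ, x ∈ S → g x = 0 := by
    refine ae_iff.2 (measure_mono_null ?_ (measure_iUnion_null hlevel))
    intro x hx
    obtain ⟨hxS, hgx⟩ := Classical.not_imp.1 hx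
    obtain ⟨n, hn⟩ := ENNReal.exists_inv_nat_lt (a := ‖g x‖₊) (by simpa using hgx)
    exact mem_iUnion.2 ⟨n, hxS, hn.le⟩
  filter_upwards [hS_g, hfg] with x hx hfx hxS
  rw [hfx, hx hxS]

theorem locallyNull_of_mul_idempotent {h : Ω → ℝ} {p : ℝ≥0∞}
    (hidem : ∀ f : Ω → ℝ, MemLp f p μ → (fun x => h x * (h x * f x)) =ᵐ[μ] fun x => h x * f x) :
    LocallyNull μ {x | h x ≠ 0 ∧ h x ≠ 1} := by
  intro A hA hμA
  refine measure_mono_null ?_ (ae_iff.1 (hidem _ (memLp_indicator_const p hA 1 (Or.inr hμA.ne))))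
  rintro x ⟨⟨h0, h1⟩, hxA⟩ hx
  simp only [indicator_of_mem hxA, mul_one] at hx
  exact h1 (mul_left_cancel₀ h0 (hx.trans (mul_one _).symm))

omit [MeasurableSpace Ω] in
theorem mul_eq_indicator_setOf_eq_one {h f : Ω → ℝ} {x : Ω}
    (hx : h x ≠ 0 ∧ h x ≠ 1 → f x = 0) : h x * f x = {x | h x = 1}.indicator f x := by
  by_cases h1 : h x = 1
  · simp [h1]
  by_cases h0 : h x = 0
  · simp [h0]
  simp [h1, hx ⟨h0, h1⟩]

theorem exists_memLp_ae_eq_indicator_iff {E : Type*} [NormedAddCommGroup E] {T : Set Ω}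
    {f : Ω → E} {p : ℝ≥0∞} (hf : MemLp f p μ) :
    (∃ g : Ω → E, MemLp g p μ ∧ f =ᵐ[μ] T.indicator g) ↔ ∀ᵐ x ∂μ, x ∉ T → f x = 0 := by
  constructor
  · rintro ⟨g, -, hfg⟩
    filter_upwards [hfg] with x hx hxT
    rw [hx, indicator_of_notMem hxT]
  · intro hf0
    refine ⟨f, hf, ?_⟩
    filter_upwards [hf0] with x hx
    by_cases hxT : x ∈ T
    · rw [indicator_of_mem hxT]
    · rw [indicator_of_notMem hxT, hx hxT]

end

theorem multiplication_band_projection_general {Ω : Type*} [MeasurableSpace Ω] (μ : Measure Ω)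
    (p : ℝ≥0∞) (hp : 1 ≤ p) (hp' : p ≠ ∞)
    (h : Ω → ℝ)
    (hidem : ∀ f : Ω → ℝ, MemLp f p μ →
      (fun x => h x * (h x * f x)) =ᵐ[μ] fun x => h x * f x) :
    (∀ A : Set Ω, MeasurableSet A → μ A < ∞ →
      μ ({x | h x ≠ 0 ∧ h x ≠ 1} ∩ A) = 0) ∧
    (∀ f : Ω → ℝ, MemLp f p μ →
      (fun x => h x * f x) =ᵐ[μ] ({x | h x = 1}).indicator f) ∧
    (∀ f : Ω → ℝ, MemLp f p μ →
      ((∃ g : Ω → ℝ, MemLp g p μ ∧ f =ᵐ[μ] fun x => h x * g x) ↔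
        μ ({x | f x ≠ 0} ∩ {x | h x ≠ 1}) = 0)) := by
  have hp0 : p ≠ 0 := (zero_lt_one.trans_le hp).ne'
  have hnull : LocallyNull μ {x | h x ≠ 0 ∧ h x ≠ 1} := locallyNull_of_mul_idempotent hidem
  have hind : ∀ f : Ω → ℝ, MemLp f p μ →
      (fun x => h x * f x) =ᵐ[μ] ({x | h x = 1}).indicator f := fun f hf =>
    (hnull.ae_eq_zero_of_memLp hf hp0 hp').mono fun x hx => mul_eq_indicator_setOf_eq_one hx
  refine ⟨hnull, hind, fun f hf => ?_⟩
  calc (∃ g : Ω → ℝ, MemLp g p μ ∧ f =ᵐ[μ] fun x => h x * g x)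
      ↔ ∃ g : Ω → ℝ, MemLp g p μ ∧ f =ᵐ[μ] ({x | h x = 1}).indicator g :=
        exists_congr fun g => and_congr_right fun hg =>
          ⟨fun hfg => hfg.trans (hind g hg), fun hfg => hfg.trans (hind g hg).symm⟩
    _ ↔ ∀ᵐ x ∂μ, h x ≠ 1 → f x = 0 := exists_memLp_ae_eq_indicator_iff hf
    _ ↔ μ ({x | f x ≠ 0} ∩ {x | h x ≠ 1}) = 0 := by
        rw [ae_iff]
        simp only [Classical.not_imp, and_comm]
        rfl

/-- If `h` is locally measurable and multiplication by `h` is a band projection on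
`L_p(μ)` (it maps `L_p` into itself, is idempotent a.e., and satisfies `0 ≤ P ≤ I`),
then `Ω \ ([h = 0] ∪ [h = 1])` is a local null set, `P` is multiplication by the
indicator of `Ω₀ := [h = 1]`, and the range of `P` is
`{f ∈ L_p(μ) : f = 0 μ-a.e. on Ω \ Ω₀}`. -/
theorem multiplication_band_projection {Ω : Type*} [MeasurableSpace Ω] (μ : Measure Ω)
    (p : ℝ≥0∞) (hp : 1 ≤ p) (hp' : p ≠ ∞)
    (h : Ω → ℝ) (hloc : LocallyMeasurableFun μ h)
    (hmaps : ∀ f : Ω → ℝ, MemLp f p μ → MemLp (fun x => h x * f x) p μ)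
    (hidem : ∀ f : Ω → ℝ, MemLp f p μ →
      (fun x => h x * (h x * f x)) =ᵐ[μ] fun x => h x * f x)
    (hord : ∀ f : Ω → ℝ, MemLp f p μ → (0 : Ω → ℝ) ≤ᵐ[μ] f →
      ((0 : Ω → ℝ) ≤ᵐ[μ] fun x => h x * f x) ∧ (fun x => h x * f x) ≤ᵐ[μ] f) :
    (∀ A : Set Ω, MeasurableSet A → μ A < ∞ →
      μ ({x | h x ≠ 0 ∧ h x ≠ 1} ∩ A) = 0) ∧
    (∀ f : Ω → ℝ, MemLp f p μ →
      (fun x => h x * f x) =ᵐ[μ] ({x | h x = 1}).indicator f) ∧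
    (∀ f : Ω → ℝ, MemLp f p μ →
      ((∃ g : Ω → ℝ, MemLp g p μ ∧ f =ᵐ[μ] fun x => h x * g x) ↔
        μ ({x | f x ≠ 0} ∩ {x | h x ≠ 1}) = 0)) :=
  multiplication_band_projection_general μ p hp hp' h hidem
end

section
/- A measure μ is weakly localisable if and only if for every band M in L_p(μ) (1 ≤ p < ∞) there exists a locally measurable set Ω₀ such that the band projection P onto M satisfies Pf = 1_{Ω₀}·f for all f ∈ L_p(μ). -/
open MeasureTheory Set ENNReal

/-- A band in `L_p(μ)`: a linear subspace which is a lattice ideal and is closed under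
suprema of arbitrary subsets (whenever the supremum exists). -/
def IsBand {Ω : Type*} [MeasurableSpace Ω] {μ : Measure Ω} {p : ℝ≥0∞} [Fact (1 ≤ p)]
    (M : Set (Lp ℝ p μ)) : Prop :=
  (0 : Lp ℝ p μ) ∈ M ∧
  (∀ f ∈ M, ∀ g ∈ M, f + g ∈ M) ∧
  (∀ (c : ℝ), ∀ f ∈ M, c • f ∈ M) ∧
  (∀ f ∈ M, ∀ g : Lp ℝ p μ, |g| ≤ |f| → g ∈ M) ∧
  (∀ S : Set (Lp ℝ p μ), S ⊆ M → ∀ b : Lp ℝ p μ, IsLUB S b → b ∈ M)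

/-- `P` is the band projection onto `M`: a bounded linear projection with range `M`,
fixing `M`, and satisfying `0 ≤ P ≤ I`. -/
def IsBandProjection {Ω : Type*} [MeasurableSpace Ω] {μ : Measure Ω} {p : ℝ≥0∞}
    [Fact (1 ≤ p)] (M : Set (Lp ℝ p μ)) (P : Lp ℝ p μ →L[ℝ] Lp ℝ p μ) : Prop :=
  (∀ f : Lp ℝ p μ, P f ∈ M) ∧ (∀ f ∈ M, P f = f) ∧
  (∀ f : Lp ℝ p μ, 0 ≤ f → 0 ≤ P f ∧ P f ≤ f)

/-!
A band projection `P` is determined by its values on indicators of sets of finite measure: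
`P 1_A ⊓ (1_A - P 1_A) = 0` forces `P 1_A = 1_{A'}` with `A' ⊆ A`, and these functions form a
consistent family. Weak localisability glues them into one locally measurable `g`; then `P` agrees
with multiplication by `1_{g = 1}` on indicators, hence everywhere by density.

Conversely, a consistent family of sets `D A` yields an order projection `0 ≤ P ≤ I`, multiplying
`f` by `1_{D A}` on each `A` of finite measure (glued along the countably many level sets of `f`),
and its range is a band. If band projections are indicators, `D` is therefore realised by one
locally measurable set. Applied to the sets `{f_A > q}`, `q ∈ ℚ`, this recovers a consistent family
of functions `f_A` as `sup {q | x ∈ Ω_q}`.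
-/

open NNReal

namespace IsBandProjection

variable {Ω : Type*} [MeasurableSpace Ω] {μ : Measure Ω} {p : ℝ≥0∞} [Fact (1 ≤ p)]
  {M : Set (Lp ℝ p μ)} {P Q : Lp ℝ p μ →L[ℝ] Lp ℝ p μ}

theorem mem_iff (hP : IsBandProjection M P) {f : Lp ℝ p μ} : f ∈ M ↔ P f = f :=
  ⟨hP.2.1 f, fun h => h ▸ hP.1 f⟩

theorem monotone (hP : IsBandProjection M P) : Monotone P := fun f g hfg => by
  simpa [sub_nonneg] using (hP.2.2 (g - f) (sub_nonneg.2 hfg)).1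

theorem sub_apply_le_sub_apply (hP : IsBandProjection M P) {f g : Lp ℝ p μ} (hfg : f ≤ g) :
    f - P f ≤ g - P g := by
  have := (hP.2.2 (g - f) (sub_nonneg.2 hfg)).2
  rw [map_sub, sub_le_sub_iff] at this
  rwa [sub_le_sub_iff, add_comm f]

theorem apply_abs (hP : IsBandProjection M P) {f : Lp ℝ p μ} (hf : f ∈ M) : P |f| = |f| := by
  have hle : |f| ≤ P |f| :=
    calc |f| = |P f| := by rw [hP.mem_iff.1 hf]
      _ ≤ P |f| := abs_le'.2 ⟨hP.monotone (le_abs_self f), map_neg P f ▸ hP.monotone (neg_le_abs f)⟩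
  exact le_antisymm (hP.2.2 _ (abs_nonneg f)).2 hle

theorem mem_of_abs_le (hP : IsBandProjection M P) {f g : Lp ℝ p μ} (hf : f ∈ M) (hgf : |g| ≤ |f|) :
    g ∈ M := by
  -- `I - P` is monotone and vanishes at `±|f|`, hence at `g`.
  obtain ⟨hup, hlow⟩ := abs_le'.1 hgf
  have h1 := hP.sub_apply_le_sub_apply (neg_le.1 hlow)
  have h2 := hP.sub_apply_le_sub_apply hup
  rw [hP.apply_abs hf, sub_self] at h2
  rw [map_neg, hP.apply_abs hf, neg_sub_neg, sub_self] at h1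
  exact hP.mem_iff.2 (sub_eq_zero.1 (le_antisymm h2 h1)).symm

theorem isLUB_mem (hP : IsBandProjection M P) {S : Set (Lp ℝ p μ)} (hS : S ⊆ M) {b : Lp ℝ p μ}
    (hb : IsLUB S b) : b ∈ M := by
  have hbP : b ≤ P b := hb.2 fun f hf => hP.mem_iff.1 (hS hf) ▸ hP.monotone (hb.1 hf)
  have hPb : P b ≤ b := by
    rcases S.eq_empty_or_nonempty with rfl | ⟨f, hf⟩
    · have := hb.2 (show b + (b - P b) ∈ upperBounds ∅ by simp)
      rwa [le_add_iff_nonneg_right, sub_nonneg] at this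
    · have := hP.sub_apply_le_sub_apply (hb.1 hf)
      rwa [hP.mem_iff.1 (hS hf), sub_self, sub_nonneg] at this
  exact hP.mem_iff.2 (le_antisymm hPb hbP)

theorem isBand (hP : IsBandProjection M P) : IsBand M := by
  refine ⟨hP.mem_iff.2 (map_zero P), fun f hf g hg => ?_, fun c f hf => ?_,
    fun f hf g hgf => hP.mem_of_abs_le hf hgf, fun S hS b hb => hP.isLUB_mem hS hb⟩
  · rw [hP.mem_iff, map_add, hP.mem_iff.1 hf, hP.mem_iff.1 hg]
  · rw [hP.mem_iff, map_smul, hP.mem_iff.1 hf]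

theorem apply_eq_inf (hP : IsBandProjection M P) {u v : Lp ℝ p μ} (hv : 0 ≤ v) (hvu : v ≤ u) :
    P v = v ⊓ P u := by
  have hPu : 0 ≤ P u := (hP.2.2 u (hv.trans hvu)).1
  have hmem : v ⊓ P u ∈ M := hP.mem_of_abs_le (hP.1 u) <| by
    rw [abs_of_nonneg (le_inf hv hPu), abs_of_nonneg hPu]
    exact inf_le_right
  refine le_antisymm (le_inf (hP.2.2 v hv).2 (hP.monotone hvu)) ?_
  calc v ⊓ P u = P (v ⊓ P u) := (hP.mem_iff.1 hmem).symm
    _ ≤ P v := hP.monotone inf_le_left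

theorem apply_inf_sub_apply_eq_zero (hP : IsBandProjection M P) {u : Lp ℝ p μ} (hu : 0 ≤ u) :
    P u ⊓ (u - P u) = 0 := by
  have h := hP.apply_eq_inf (sub_nonneg.2 (hP.2.2 u hu).2) (sub_le_self u (hP.2.2 u hu).1)
  rwa [map_sub, hP.mem_iff.1 (hP.1 u), sub_self, inf_comm, eq_comm] at h

theorem apply_eq_apply (hP : IsBandProjection M P) (hQ : IsBandProjection M Q) (f : Lp ℝ p μ) :
    P f = Q f := by
  have key : ∀ u, 0 ≤ u → P u = Q u := fun u hu => by
    have hPQ := hP.apply_eq_inf (hQ.2.2 u hu).1 (hQ.2.2 u hu).2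
    have hQP := hQ.apply_eq_inf (hP.2.2 u hu).1 (hP.2.2 u hu).2
    rw [hP.mem_iff.1 (hQ.1 u)] at hPQ
    rw [hQ.mem_iff.1 (hP.1 u)] at hQP
    exact le_antisymm (hQP ▸ inf_le_right) (hPQ ▸ inf_le_right)
  rw [← posPart_sub_negPart f, map_sub, map_sub, key _ (posPart_nonneg f),
    key _ (negPart_nonneg f)]

end IsBandProjection

section SupportLevel

variable {Ω E : Type*} [NormedAddCommGroup E]

def supportLevel (f : Ω → E) (n : ℕ) : Set Ω := {x | ((n : ℝ≥0) + 1)⁻¹ ≤ ‖f x‖₊}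

theorem exists_mem_supportLevel {f : Ω → E} {x : Ω} (hx : f x ≠ 0) :
    ∃ n, x ∈ supportLevel f n := by
  obtain ⟨n, hn⟩ := exists_nat_one_div_lt (nnnorm_pos.2 hx)
  exact ⟨n, by simpa [supportLevel] using hn.le⟩

variable [MeasurableSpace Ω] {μ : Measure Ω} {p : ℝ≥0∞}

theorem Lp.measurableSet_supportLevel (f : Lp E p μ) (n : ℕ) :
    MeasurableSet (supportLevel f n) :=
  (Lp.stronglyMeasurable f).nnnorm.measurable measurableSet_Ici

variable [Fact (1 ≤ p)]

theorem Lp.measure_supportLevel_lt_top (hp : p ≠ ∞) (f : Lp E p μ) (n : ℕ) :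
    μ (supportLevel f n) < ∞ :=
  (Lp.memLp f).meas_ge_lt_top (zero_lt_one.trans_le Fact.out).ne' hp (by positivity)

theorem Lp.ext_of_forall_ae_restrict (hp : p ≠ ∞) {u v : Lp E p μ}
    (h : ∀ A, MeasurableSet A → μ A < ∞ → u =ᵐ[μ.restrict A] v) : u = v := by
  have hlevel : ∀ n, ∀ᵐ x ∂μ, x ∈ supportLevel (u - v) n → u x = v x := fun n =>
    (ae_restrict_iff' (measurableSet_supportLevel _ n)).1
      (h _ (measurableSet_supportLevel _ n) (measure_supportLevel_lt_top hp _ n))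
  apply Lp.ext
  filter_upwards [ae_all_iff.2 hlevel, Lp.coeFn_sub u v] with x hx hsub
  by_contra hne
  obtain ⟨n, hn⟩ := exists_mem_supportLevel (f := ⇑(u - v)) (x := x)
    (by rwa [hsub, Pi.sub_apply, sub_ne_zero])
  exact hne (hx n hn)

end SupportLevel

section ConsistentSetFamily

variable {Ω : Type*} [MeasurableSpace Ω] {μ : Measure Ω} {p : ℝ≥0∞} [Fact (1 ≤ p)]
  {D : Set Ω → Set Ω}

variable (μ D) in
def IsConsistentSetFamily : Prop :=
  (∀ A, MeasurableSet A → μ A < ∞ → MeasurableSet (D A)) ∧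
  ∀ A B, MeasurableSet A → μ A < ∞ → MeasurableSet B → μ B < ∞ →
    ∀ᵐ x ∂μ.restrict (A ∩ B), (x ∈ D A ↔ x ∈ D B)

variable (D) in
def localCarrier (f : Ω → ℝ) : Set Ω := ⋃ n, supportLevel f n ∩ D (supportLevel f n)

namespace IsConsistentSetFamily

variable (hD : IsConsistentSetFamily μ D) (hp : p ≠ ∞)
include hD hp

theorem measurableSet_localCarrier (f : Lp ℝ p μ) : MeasurableSet (localCarrier D f) :=
  .iUnion fun n => (Lp.measurableSet_supportLevel f n).inter
    (hD.1 _ (Lp.measurableSet_supportLevel f n) (Lp.measure_supportLevel_lt_top hp f n))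

theorem indicator_localCarrier_ae_restrict (f : Lp ℝ p μ) {A : Set Ω} (hA : MeasurableSet A)
    (hμA : μ A < ∞) : (localCarrier D f).indicator f =ᵐ[μ.restrict A] (D A).indicator f := by
  have hcons : ∀ n, ∀ᵐ x ∂μ, x ∈ supportLevel f n ∩ A →
      (x ∈ D (supportLevel f n) ↔ x ∈ D A) := fun n =>
    (ae_restrict_iff' ((Lp.measurableSet_supportLevel f n).inter hA)).1 <|
      hD.2 _ A (Lp.measurableSet_supportLevel f n) (Lp.measure_supportLevel_lt_top hp f n) hA hμA
  rw [Filter.EventuallyEq, ae_restrict_iff' hA]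
  filter_upwards [ae_all_iff.2 hcons] with x hx hxA
  by_cases hfx : f x = 0
  · rw [Set.indicator_apply_eq_zero.2 fun _ => hfx, Set.indicator_apply_eq_zero.2 fun _ => hfx]
  obtain ⟨n, hn⟩ := exists_mem_supportLevel hfx
  have hmem : x ∈ localCarrier D f ↔ x ∈ D A :=
    ⟨fun h => by
      obtain ⟨m, hm, hmD⟩ := mem_iUnion.1 h
      exact (hx m ⟨hm, hxA⟩).1 hmD,
    fun h => mem_iUnion.2 ⟨n, hn, (hx n ⟨hn, hxA⟩).2 h⟩⟩
  by_cases hxD : x ∈ D A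
  · rw [Set.indicator_of_mem (hmem.2 hxD), Set.indicator_of_mem hxD]
  · rw [Set.indicator_of_notMem (mt hmem.1 hxD), Set.indicator_of_notMem hxD]

noncomputable def carrierIndicator (f : Lp ℝ p μ) : Lp ℝ p μ :=
  ((Lp.memLp f).indicator (hD.measurableSet_localCarrier hp f)).toLp _

theorem coeFn_carrierIndicator (f : Lp ℝ p μ) :
    hD.carrierIndicator hp f =ᵐ[μ] (localCarrier D f).indicator f :=
  MemLp.coeFn_toLp _

theorem carrierIndicator_ae_restrict (f : Lp ℝ p μ) {A : Set Ω} (hA : MeasurableSet A)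
    (hμA : μ A < ∞) : hD.carrierIndicator hp f =ᵐ[μ.restrict A] (D A).indicator f :=
  Filter.EventuallyEq.trans (ae_restrict_of_ae (hD.coeFn_carrierIndicator hp f))
    (hD.indicator_localCarrier_ae_restrict hp f hA hμA)

theorem carrierIndicator_add (f g : Lp ℝ p μ) :
    hD.carrierIndicator hp (f + g) = hD.carrierIndicator hp f + hD.carrierIndicator hp g :=
  Lp.ext_of_forall_ae_restrict hp fun A hA hμA => by
    filter_upwards [hD.carrierIndicator_ae_restrict hp (f + g) hA hμA,
      hD.carrierIndicator_ae_restrict hp f hA hμA, hD.carrierIndicator_ae_restrict hp g hA hμA,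
      ae_restrict_of_ae (Lp.coeFn_add f g), ae_restrict_of_ae (Lp.coeFn_add
        (hD.carrierIndicator hp f) (hD.carrierIndicator hp g))] with x h h₁ h₂ hfg hsum
    rw [h, hsum, Pi.add_apply, h₁, h₂]
    by_cases hx : x ∈ D A
    · rw [Set.indicator_of_mem hx, Set.indicator_of_mem hx, Set.indicator_of_mem hx, hfg,
        Pi.add_apply]
    · rw [Set.indicator_of_notMem hx, Set.indicator_of_notMem hx, Set.indicator_of_notMem hx,
        add_zero]

theorem carrierIndicator_smul (c : ℝ) (f : Lp ℝ p μ) :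
    hD.carrierIndicator hp (c • f) = c • hD.carrierIndicator hp f :=
  Lp.ext_of_forall_ae_restrict hp fun A hA hμA => by
    filter_upwards [hD.carrierIndicator_ae_restrict hp (c • f) hA hμA,
      hD.carrierIndicator_ae_restrict hp f hA hμA, ae_restrict_of_ae (Lp.coeFn_smul c f),
      ae_restrict_of_ae (Lp.coeFn_smul c (hD.carrierIndicator hp f))] with x h h₁ hcf hsmul
    rw [h, hsmul, Pi.smul_apply, h₁]
    by_cases hx : x ∈ D A
    · rw [Set.indicator_of_mem hx, Set.indicator_of_mem hx, hcf, Pi.smul_apply]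
    · rw [Set.indicator_of_notMem hx, Set.indicator_of_notMem hx, smul_zero]

theorem norm_carrierIndicator_le (f : Lp ℝ p μ) : ‖hD.carrierIndicator hp f‖ ≤ ‖f‖ := by
  refine Lp.norm_le_norm_of_ae_le ?_
  filter_upwards [hD.coeFn_carrierIndicator hp f] with x hx
  rw [hx]
  exact norm_indicator_le_norm_self _ _

noncomputable def bandProjection : Lp ℝ p μ →L[ℝ] Lp ℝ p μ :=
  LinearMap.mkContinuous
    { toFun := hD.carrierIndicator hp
      map_add' := hD.carrierIndicator_add hp
      map_smul' := hD.carrierIndicator_smul hp }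
    1 fun f => by simpa using hD.norm_carrierIndicator_le hp f

theorem bandProjection_ae_restrict (f : Lp ℝ p μ) {A : Set Ω} (hA : MeasurableSet A)
    (hμA : μ A < ∞) : hD.bandProjection hp f =ᵐ[μ.restrict A] (D A).indicator f :=
  hD.carrierIndicator_ae_restrict hp f hA hμA

theorem isBandProjection_bandProjection :
    IsBandProjection {f | hD.bandProjection hp f = f} (hD.bandProjection hp) := by
  refine ⟨fun f => ?_, fun f hf => hf, fun f hf => ?_⟩
  · refine Lp.ext_of_forall_ae_restrict hp fun A hA hμA => ?_
    filter_upwards [hD.bandProjection_ae_restrict hp (hD.bandProjection hp f) hA hμA,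
      hD.bandProjection_ae_restrict hp f hA hμA] with x h h₁
    rw [h]
    by_cases hx : x ∈ D A <;> simp [hx, h₁]
  · have hcoe : hD.bandProjection hp f =ᵐ[μ] (localCarrier D f).indicator f :=
      hD.coeFn_carrierIndicator hp f
    rw [← Lp.coeFn_nonneg] at hf
    rw [← Lp.coeFn_nonneg, ← Lp.coeFn_le]
    constructor <;> filter_upwards [hcoe, hf] with x hx hfx <;> rw [hx]
    · exact Set.indicator_nonneg (fun _ _ => hfx) x
    · exact Set.indicator_le_self' (fun _ _ => hfx) x

end IsConsistentSetFamily

end ConsistentSetFamily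

section FromBands

variable {Ω : Type*} [MeasurableSpace Ω] {μ : Measure Ω}

theorem exists_locallyMeasurable_of_forall_isBand {p : ℝ≥0∞} [Fact (1 ≤ p)] (hp : p ≠ ∞)
    (H : ∀ M : Set (Lp ℝ p μ), IsBand M →
      ∃ Ω₀ : Set Ω, LocallyMeasurable μ Ω₀ ∧
        ∀ P : Lp ℝ p μ →L[ℝ] Lp ℝ p μ, IsBandProjection M P →
          ∀ f : Lp ℝ p μ, (P f : Ω → ℝ) =ᵐ[μ] fun x => Ω₀.indicator (f : Ω → ℝ) x)
    {D : Set Ω → Set Ω} (hD : IsConsistentSetFamily μ D) :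
    ∃ Ω₀ : Set Ω, LocallyMeasurable μ Ω₀ ∧
      ∀ A, MeasurableSet A → μ A < ∞ → ∀ᵐ x ∂μ.restrict A, (x ∈ D A ↔ x ∈ Ω₀) := by
  have hP := hD.isBandProjection_bandProjection hp
  obtain ⟨Ω₀, hΩ₀, hPΩ₀⟩ := H _ hP.isBand
  refine ⟨Ω₀, hΩ₀, fun A hA hμA => ?_⟩
  let e : Lp ℝ p μ := indicatorConstLp p hA hμA.ne 1
  filter_upwards [hD.bandProjection_ae_restrict hp e hA hμA, ae_restrict_of_ae (hPΩ₀ _ hP e),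
    ae_restrict_of_ae (indicatorConstLp_coeFn (p := p) (hs := hA) (hμs := hμA.ne) (c := (1 : ℝ))),
    ae_restrict_mem hA]
    with x hPD hPΩ hex hxA
  rw [hPD] at hPΩ
  rw [Set.indicator_of_mem hxA] at hex
  by_cases hxD : x ∈ D A <;> by_cases hxΩ : x ∈ Ω₀ <;>
    simp [Set.indicator_of_mem, Set.indicator_of_notMem, hxD, hxΩ, e, hex] at hPΩ ⊢

theorem EReal.iSup_ite_rat_lt (r : ℝ) :
    ⨆ q : ℚ, (if (q : ℝ) < r then ((q : ℝ) : EReal) else ⊥) = r := by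
  refine le_antisymm (iSup_le fun q => ?_) (le_of_forall_lt fun c hc => ?_)
  · split_ifs with hq
    · exact EReal.coe_le_coe_iff.2 hq.le
    · exact bot_le
  · obtain ⟨q, hcq, hqr⟩ := EReal.lt_iff_exists_rat_btwn.1 hc
    refine hcq.trans_le (le_iSup_of_le q ?_)
    rw [if_pos (EReal.coe_lt_coe_iff.1 hqr)]

theorem weaklyLocalisable_of_forall_isConsistentSetFamily
    (H : ∀ D : Set Ω → Set Ω, IsConsistentSetFamily μ D →
      ∃ Ω₀ : Set Ω, LocallyMeasurable μ Ω₀ ∧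
        ∀ A, MeasurableSet A → μ A < ∞ → ∀ᵐ x ∂μ.restrict A, (x ∈ D A ↔ x ∈ Ω₀)) :
    WeaklyLocalisable μ := by
  intro f hf hcons
  have hD : ∀ q : ℚ, IsConsistentSetFamily μ fun A => {x | (q : ℝ) < A.indicator (f A) x} :=
    fun q => ⟨fun A hA hμA => hf A hA hμA measurableSet_Ioi, fun A B hA hμA hB hμB => by
      filter_upwards [hcons A B hA hμA hB hμB, ae_restrict_mem (hA.inter hB)] with x hx hxAB
      simp only [Set.indicator_of_mem hxAB.1, Set.indicator_of_mem hxAB.2, hx]⟩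
  choose Ω₀ hΩ₀ hΩ₀D using fun q => H _ (hD q)
  classical
  -- In `EReal` the value `⊥` discards the rationals `q` with `x ∉ Ω₀ q`, and the supremum exists.
  refine ⟨fun x => (⨆ q : ℚ, if x ∈ Ω₀ q then ((q : ℝ) : EReal) else ⊥).toReal,
    fun A hA hμA => ?_, fun A hA hμA => ?_⟩
  · have hind : A.indicator (fun x => (⨆ q : ℚ, if x ∈ Ω₀ q then ((q : ℝ) : EReal) else ⊥).toReal)
        = fun x => (⨆ q : ℚ, if x ∈ Ω₀ q ∩ A then ((q : ℝ) : EReal) else ⊥).toReal := by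
      ext x
      by_cases hx : x ∈ A <;> simp [hx]
    rw [hind]
    exact (Measurable.iSup fun q =>
      Measurable.ite (hΩ₀ q A hA hμA) measurable_const measurable_const).ereal_toReal
  · filter_upwards [ae_all_iff.2 fun q => hΩ₀D q A hA hμA, ae_restrict_mem hA] with x hx hxA
    simp only [Set.indicator_of_mem hxA] at hx
    simp only [← hx, EReal.iSup_ite_rat_lt, EReal.toReal_coe]

end FromBands

section ToBands

variable {Ω : Type*} [MeasurableSpace Ω] {μ : Measure Ω} {p : ℝ≥0∞}

theorem indicatorConstLp_nonneg {A : Set Ω} (hA : MeasurableSet A) (hμA : μ A ≠ ∞) {c : ℝ}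
    (hc : 0 ≤ c) : 0 ≤ indicatorConstLp p hA hμA c := by
  rw [← Lp.coeFn_nonneg]
  filter_upwards [indicatorConstLp_coeFn (p := p) (hs := hA) (hμs := hμA) (c := c)] with x hx
  exact hx ▸ Set.indicator_nonneg (fun _ _ => hc) x

variable [Fact (1 ≤ p)]

theorem Lp.isClosed_setOf_ae_eq_indicator {E : Type*} [NormedAddCommGroup E]
    {T : Lp E p μ → Lp E p μ} (hT : Continuous T) (s : Set Ω) :
    IsClosed {f : Lp E p μ | T f =ᵐ[μ] s.indicator f} := by
  refine IsSeqClosed.isClosed fun fs f hfs hlim => ?_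
  obtain ⟨ns, hns, hf⟩ := (tendstoInMeasure_of_tendsto_Lp hlim).exists_seq_tendsto_ae
  obtain ⟨ms, hms, hTf⟩ := (tendstoInMeasure_of_tendsto_Lp
    ((hT.tendsto f).comp (hlim.comp hns.tendsto_atTop))).exists_seq_tendsto_ae
  filter_upwards [hf, hTf, ae_all_iff.2 hfs] with x hfx hTfx hx
  refine tendsto_nhds_unique hTfx ?_
  simp only [Function.comp_apply, hx]
  by_cases hxs : x ∈ s
  · simpa only [Set.indicator_of_mem hxs, Function.comp_def] using hfx.comp hms.tendsto_atTop
  · simpa only [Set.indicator_of_notMem hxs] using tendsto_const_nhds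

theorem Lp.ae_eq_indicator_of_indicatorConstLp (hp : p ≠ ∞) (T : Lp ℝ p μ →L[ℝ] Lp ℝ p μ)
    (s : Set Ω) (h : ∀ A (hA : MeasurableSet A) (hμA : μ A < ∞),
      T (indicatorConstLp p hA hμA.ne 1) =ᵐ[μ] s.indicator (indicatorConstLp p hA hμA.ne (1 : ℝ)))
    (f : Lp ℝ p μ) : T f =ᵐ[μ] s.indicator f := by
  induction f using Lp.induction hp with
  | @indicatorConst c A hA hμA =>
    have hsmul : indicatorConstLp p hA hμA.ne c = c • indicatorConstLp p hA hμA.ne (1 : ℝ) := by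
      apply Lp.ext
      filter_upwards [indicatorConstLp_coeFn (p := p) (hs := hA) (hμs := hμA.ne) (c := c),
        indicatorConstLp_coeFn (p := p) (hs := hA) (hμs := hμA.ne) (c := (1 : ℝ)),
        Lp.coeFn_smul c (indicatorConstLp p hA hμA.ne (1 : ℝ))] with x hc h1 hsmul
      rw [hc, hsmul, Pi.smul_apply, h1]
      by_cases hx : x ∈ A <;> simp [hx]
    rw [Lp.simpleFunc.coe_indicatorConst, hsmul, map_smul]
    filter_upwards [Lp.coeFn_smul c (T (indicatorConstLp p hA hμA.ne 1)),
      Lp.coeFn_smul c (indicatorConstLp p hA hμA.ne (1 : ℝ)), h A hA hμA] with x hT he h1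
    rw [hT, Pi.smul_apply, h1]
    by_cases hx : x ∈ s
    · rw [Set.indicator_of_mem hx, Set.indicator_of_mem hx, he, Pi.smul_apply]
    · rw [Set.indicator_of_notMem hx, Set.indicator_of_notMem hx, smul_zero]
  | add hf hg _ hTf hTg =>
    rw [map_add]
    filter_upwards [hTf, hTg, Lp.coeFn_add (T (hf.toLp _)) (T (hg.toLp _)),
      Lp.coeFn_add (hf.toLp _) (hg.toLp _)] with x h₁ h₂ hT hfg
    rw [hT, Pi.add_apply, h₁, h₂]
    by_cases hx : x ∈ s
    · rw [Set.indicator_of_mem hx, Set.indicator_of_mem hx, Set.indicator_of_mem hx, hfg,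
        Pi.add_apply]
    · rw [Set.indicator_of_notMem hx, Set.indicator_of_notMem hx, Set.indicator_of_notMem hx,
        add_zero]
  | isClosed => exact Lp.isClosed_setOf_ae_eq_indicator T.continuous s

namespace IsBandProjection

variable {M : Set (Lp ℝ p μ)} {P : Lp ℝ p μ →L[ℝ] Lp ℝ p μ}

theorem ae_eq_zero_or_eq (hP : IsBandProjection M P) {u : Lp ℝ p μ} (hu : 0 ≤ u) :
    ∀ᵐ x ∂μ, P u x = 0 ∨ P u x = u x := by
  filter_upwards [Lp.coeFn_inf (P u) (u - P u), Lp.coeFn_sub u (P u), Lp.coeFn_zero ℝ p μ]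
    with x hinf hsub hzero
  rw [hP.apply_inf_sub_apply_eq_zero hu, hzero, Pi.zero_apply, Pi.inf_apply, hsub,
    Pi.sub_apply] at hinf
  rcases min_choice (P u x) (u x - P u x) with h | h
  · left; linarith
  · right; linarith

theorem apply_indicatorConstLp_ae_restrict (hP : IsBandProjection M P) {A B : Set Ω}
    (hA : MeasurableSet A) (hμA : μ A < ∞) (hB : MeasurableSet B) (hμB : μ B < ∞) (hBA : B ⊆ A) :
    P (indicatorConstLp p hA hμA.ne (1 : ℝ)) =ᵐ[μ.restrict B]
      P (indicatorConstLp p hB hμB.ne (1 : ℝ)) := by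
  have hA1 := indicatorConstLp_coeFn (p := p) (hs := hA) (hμs := hμA.ne) (c := (1 : ℝ))
  have hB1 := indicatorConstLp_coeFn (p := p) (hs := hB) (hμs := hμB.ne) (c := (1 : ℝ))
  have hle : indicatorConstLp p hB hμB.ne (1 : ℝ) ≤ indicatorConstLp p hA hμA.ne 1 := by
    rw [← Lp.coeFn_le]
    filter_upwards [hA1, hB1] with x hxA hxB
    rw [hxA, hxB]
    exact Set.indicator_le_indicator_of_subset hBA (fun _ => zero_le_one) x
  have hPA := (Lp.coeFn_le _ _).2 (hP.2.2 _ (indicatorConstLp_nonneg hA hμA.ne zero_le_one)).2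
  rw [hP.apply_eq_inf (indicatorConstLp_nonneg hB hμB.ne zero_le_one) hle]
  filter_upwards [ae_restrict_of_ae (Lp.coeFn_inf (indicatorConstLp p hB hμB.ne (1 : ℝ))
      (P (indicatorConstLp p hA hμA.ne 1))), ae_restrict_of_ae hA1, ae_restrict_of_ae hB1,
    ae_restrict_of_ae hPA, ae_restrict_mem hB] with x hinf hxA hxB hxPA hx
  rw [hinf, Pi.inf_apply, hxB, Set.indicator_of_mem hx]
  rw [hxA, Set.indicator_of_mem (hBA hx)] at hxPA
  exact (inf_of_le_right hxPA).symm

theorem apply_indicatorConstLp_eq_indicator (hP : IsBandProjection M P) {A : Set Ω}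
    (hA : MeasurableSet A) (hμA : μ A < ∞) {g : Ω → ℝ}
    (hg : ∀ᵐ x ∂μ.restrict A, g x = P (indicatorConstLp p hA hμA.ne (1 : ℝ)) x) :
    P (indicatorConstLp p hA hμA.ne (1 : ℝ)) =ᵐ[μ]
      {x | g x = 1}.indicator (indicatorConstLp p hA hμA.ne (1 : ℝ)) := by
  filter_upwards [hP.ae_eq_zero_or_eq (indicatorConstLp_nonneg hA hμA.ne zero_le_one),
    indicatorConstLp_coeFn (p := p) (hs := hA) (hμs := hμA.ne) (c := (1 : ℝ)),
    (ae_restrict_iff' hA).1 hg] with x h01 he hgx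
  by_cases hxA : x ∈ A
  · rw [he, Set.indicator_of_mem hxA] at h01
    rcases h01 with h0 | h1
    · have hgx1 : x ∉ {x | g x = 1} := by simp [hgx hxA, h0]
      rw [Set.indicator_of_notMem hgx1, h0]
    · have hgx1 : x ∈ {x | g x = 1} := by simp [hgx hxA, h1]
      rw [Set.indicator_of_mem hgx1, h1, he, Set.indicator_of_mem hxA]
  · rw [he, Set.indicator_of_notMem hxA, or_self] at h01
    rw [h01, Set.indicator_apply_eq_zero.2 fun _ => by rw [he, Set.indicator_of_notMem hxA]]

end IsBandProjection

end ToBands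

theorem WeaklyLocalisable.exists_ae_eq_indicator {Ω : Type*} [MeasurableSpace Ω]
    {μ : Measure Ω} (hW : WeaklyLocalisable μ) {p : ℝ≥0∞} [Fact (1 ≤ p)] (hp : p ≠ ∞)
    {M : Set (Lp ℝ p μ)} {P : Lp ℝ p μ →L[ℝ] Lp ℝ p μ} (hP : IsBandProjection M P) :
    ∃ Ω₀ : Set Ω, LocallyMeasurable μ Ω₀ ∧ ∀ f : Lp ℝ p μ, P f =ᵐ[μ] Ω₀.indicator f := by
  classical
  let F : Set Ω → Ω → ℝ := fun A =>
    if h : MeasurableSet A ∧ μ A < ∞ then P (indicatorConstLp p h.1 h.2.ne 1) else 0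
  have hF : ∀ A (hA : MeasurableSet A) (hμA : μ A < ∞),
      F A = P (indicatorConstLp p hA hμA.ne 1) := fun A hA hμA => dif_pos ⟨hA, hμA⟩
  obtain ⟨g, hg, hgF⟩ := hW F
    (fun A hA hμA => hF A hA hμA ▸ (Lp.stronglyMeasurable _).measurable.indicator hA)
    (fun A B hA hμA hB hμB => by
      have hμAB : μ (A ∩ B) < ∞ := (measure_mono inter_subset_left).trans_lt hμA
      rw [hF A hA hμA, hF B hB hμB]
      exact (hP.apply_indicatorConstLp_ae_restrict hA hμA (hA.inter hB) hμAB
        inter_subset_left).trans (hP.apply_indicatorConstLp_ae_restrict hB hμB (hA.inter hB) hμAB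
        inter_subset_right).symm)
  refine ⟨{x | g x = 1}, fun A hA hμA => ?_,
    Lp.ae_eq_indicator_of_indicatorConstLp hp P _ fun A hA hμA => ?_⟩
  · have hset : {x | g x = 1} ∩ A = A.indicator g ⁻¹' {1} ∩ A := by
      ext x
      by_cases hx : x ∈ A <;> simp [hx]
    rw [hset]
    exact (hg A hA hμA (measurableSet_singleton 1)).inter hA
  · have hgA := hgF A hA hμA
    rw [hF A hA hμA] at hgA
    exact hP.apply_indicatorConstLp_eq_indicator hA hμA hgA

/-- `μ` is weakly localisable iff for every band `M` in `L_p(μ)` (`1 ≤ p < ∞`) there is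
a locally measurable set `Ω₀` such that the band projection onto `M` is multiplication
by `1_{Ω₀}`. -/
theorem weaklyLocalisable_iff_bands_are_indicators {Ω : Type*} [MeasurableSpace Ω]
    (μ : Measure Ω) (p : ℝ≥0∞) [Fact (1 ≤ p)] (hp' : p ≠ ∞) :
    WeaklyLocalisable μ ↔
      ∀ M : Set (Lp ℝ p μ), IsBand M →
        ∃ Ω₀ : Set Ω, LocallyMeasurable μ Ω₀ ∧
          ∀ P : Lp ℝ p μ →L[ℝ] Lp ℝ p μ, IsBandProjection M P →
            ∀ f : Lp ℝ p μ, (P f : Ω → ℝ) =ᵐ[μ] fun x => Ω₀.indicator (f : Ω → ℝ) x := by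
  refine ⟨fun hW M _ => ?_, fun H => weaklyLocalisable_of_forall_isConsistentSetFamily
    fun D hD => exists_locallyMeasurable_of_forall_isBand hp' H hD⟩
  by_cases hM : ∃ P, IsBandProjection M P
  · obtain ⟨P₀, hP₀⟩ := hM
    obtain ⟨Ω₀, hΩ₀, hP₀Ω₀⟩ := hW.exists_ae_eq_indicator hp' hP₀
    exact ⟨Ω₀, hΩ₀, fun P hP f => hP.apply_eq_apply hP₀ f ▸ hP₀Ω₀ f⟩
  · exact ⟨∅, fun A _ _ => by simp, fun P hP => absurd ⟨P, hP⟩ hM⟩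
end

section
/- For every band M in L_p(μ), 1 ≤ p < ∞, there exists a locally disjoint decomposition μ = μ' + μ'' such that M = {f ∈ L_p(μ) : f = 0 μ''-a.e.} and M^⊥ = {f ∈ L_p(μ) : f = 0 μ'-a.e.}. Moreover μ' and μ'' can be chosen so that μ'(A) = μ''(A) = ∞ for all A ∈ 𝒜 that are not σ-finite. -/
/-!
Write `ν_N = ⨆_{f ∈ N} μ|_{f ≠ 0}` for a set `N ⊆ L_p(μ)`, and `M^⊥` for the disjoint complement
of the band `M`. Inside a set `A` of finite measure, the supports of elements of `M` have an
a.e.-largest member `U`: the indicator of a countable union of such supports is the supremum of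
the elements `|f| ⊓ n|b_k|`, hence lies in `M`, and a maximizing sequence does the rest. Then
`1_{A \ U} ∈ M^⊥`, so `ν_M(A) = μ(U)` and `ν_{M^⊥}(A) = μ(A \ U)`; this is the local
disjointness, and it gives `μ = ν_M + ν_{M^⊥}` on σ-finite sets. Adding to both measures the
measure that is `∞` exactly on the non-σ-finite sets repairs the decomposition there and changes
no null set of a support, since for `p < ∞` supports are σ-finite. The same carriers show
`M^⊥⊥ = M`, which identifies `M` as the functions vanishing `ν_{M^⊥}`-a.e.
-/

open MeasureTheory Set ENNReal

/-- Measures `μ'`, `μ''` dominated by `μ` are locally disjoint if every measurable set of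
finite `μ`-measure splits into a disjoint measurable union of a `μ''`-null and a
`μ'`-null part. -/
def LocallyDisjoint {Ω : Type*} [MeasurableSpace Ω] (μ μ' μ'' : Measure Ω) : Prop :=
  μ' ≤ μ ∧ μ'' ≤ μ ∧
  ∀ A : Set Ω, MeasurableSet A → μ A < ∞ →
    ∃ A' A'' : Set Ω, MeasurableSet A' ∧ MeasurableSet A'' ∧ A = A' ∪ A'' ∧
      Disjoint A' A'' ∧ μ' A'' = 0 ∧ μ'' A' = 0

open Filter Function

lemma abs_inf_abs_eq_zero_iff {a b : ℝ} : |a| ⊓ |b| = 0 ↔ a = 0 ∨ b = 0 := by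
  refine ⟨fun h => ?_, by rintro (rfl | rfl) <;> simp⟩
  by_contra! hab
  exact (lt_inf_iff.2 ⟨abs_pos.2 hab.1, abs_pos.2 hab.2⟩).ne' h

lemma exists_nat_abs_le_mul_abs (a : ℝ) {c : ℝ} (hc : c ≠ 0) : ∃ n : ℕ, |a| ≤ n * |c| := by
  obtain ⟨n, hn⟩ := exists_nat_ge (|a| / |c|)
  exact ⟨n, (div_le_iff₀ (abs_pos.2 hc)).1 hn⟩

section Measures

variable {Ω : Type*} [MeasurableSpace Ω]

theorem exists_ae_greatest_of_iUnion_mem {μ : Measure Ω} {𝒯 : Set (Set Ω)} (hne : 𝒯.Nonempty)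
    (h_meas : ∀ t ∈ 𝒯, MeasurableSet t) (h_fin : ∀ t ∈ 𝒯, μ t ≠ ∞)
    (h_iUnion : ∀ t : ℕ → Set Ω, (∀ n, t n ∈ 𝒯) → ⋃ n, t n ∈ 𝒯) :
    ∃ s ∈ 𝒯, ∀ t ∈ 𝒯, t ≤ᵐ[μ] s := by
  obtain ⟨u, -, hu_lim, hu_mem⟩ := exists_seq_tendsto_sSup (hne.image μ) (OrderTop.bddAbove _)
  choose t ht hμt using hu_mem
  set s := ⋃ n, t n
  have hs : s ∈ 𝒯 := h_iUnion t ht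
  have hs_max : ∀ t' ∈ 𝒯, μ t' ≤ μ s := fun t' ht' =>
    (le_sSup (mem_image_of_mem μ ht')).trans <|
      le_of_tendsto' hu_lim fun n => hμt n ▸ measure_mono (subset_iUnion t n)
  refine ⟨s, hs, fun t' ht' => ae_le_set.2 ?_⟩
  let pair : ℕ → Set Ω := fun n => if n = 0 then t' else s
  have hpair : t' ∪ s ⊆ ⋃ n, pair n := union_subset (subset_iUnion pair 0) (subset_iUnion pair 1)
  have hunion : μ (t' ∪ s) ≤ μ s :=
    (measure_mono hpair).trans <| hs_max _ <| h_iUnion pair fun n => by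
      by_cases hn : n = 0 <;> simp [pair, hn, ht', hs]
  rw [← union_sdiff_right, measure_sdiff subset_union_right (h_meas s hs).nullMeasurableSet
    (h_fin s hs)]
  exact tsub_eq_zero_of_le hunion

def IsSigmaFiniteSet (μ : Measure Ω) (A : Set Ω) : Prop :=
  ∃ s : ℕ → Set Ω, (∀ n, MeasurableSet (s n) ∧ μ (s n) < ∞) ∧ A ⊆ ⋃ n, s n

variable {μ : Measure Ω}

lemma isSigmaFiniteSet_of_lt_top {A : Set Ω} (hA : MeasurableSet A) (hμA : μ A < ∞) :
    IsSigmaFiniteSet μ A :=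
  ⟨fun _ => A, fun _ => ⟨hA, hμA⟩, subset_iUnion (fun _ : ℕ => A) 0⟩

lemma IsSigmaFiniteSet.mono {A B : Set Ω} (hB : IsSigmaFiniteSet μ B) (hAB : A ⊆ B) :
    IsSigmaFiniteSet μ A :=
  let ⟨s, hs, hBs⟩ := hB
  ⟨s, hs, hAB.trans hBs⟩

lemma IsSigmaFiniteSet.iUnion {A : ℕ → Set Ω} (hA : ∀ n, IsSigmaFiniteSet μ (A n)) :
    IsSigmaFiniteSet μ (⋃ n, A n) := by
  choose s hs hAs using hA
  refine ⟨fun k => s k.unpair.1 k.unpair.2, fun k => hs _ _, iUnion_subset fun n x hx => ?_⟩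
  obtain ⟨m, hm⟩ := mem_iUnion.1 (hAs n hx)
  exact mem_iUnion.2 ⟨Nat.pair n m, by simpa only [Nat.unpair_pair] using hm⟩

lemma IsSigmaFiniteSet.measure_eq {A : Set Ω} (hA : IsSigmaFiniteSet μ A) (hAm : MeasurableSet A)
    {m₁ m₂ : Measure Ω} (h : ∀ B, MeasurableSet B → μ B < ∞ → m₁ B = m₂ B) : m₁ A = m₂ A := by
  obtain ⟨s, hs, hAs⟩ := hA
  set B : ℕ → Set Ω := fun n => A ∩ accumulate s n
  have hB_meas : ∀ n, MeasurableSet (B n) := fun n =>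
    hAm.inter (accumulate_def (x := n) ▸ MeasurableSet.biUnion (to_countable _) fun i _ => (hs i).1)
  have hB_fin : ∀ n, μ (B n) < ∞ := fun n =>
    (measure_mono inter_subset_right).trans_lt <| accumulate_def (x := n) ▸
      measure_biUnion_lt_top (s := Iic n) (finite_Iic n) fun i _ => (hs i).2
  have hB_mono : Monotone B := fun m n hmn => inter_subset_inter_right A (monotone_accumulate hmn)
  have hB_iUnion : ⋃ n, B n = A := by
    rw [← inter_iUnion, iUnion_accumulate, inter_eq_left.2 hAs]
  rw [← hB_iUnion, hB_mono.measure_iUnion, hB_mono.measure_iUnion]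
  exact iSup_congr fun n => h _ (hB_meas n) (hB_fin n)

open Classical in
variable (μ) in
/-- The measure that vanishes on `μ`-σ-finite sets and is `∞` on all other measurable sets. -/
noncomputable def infOnNonSigmaFinite : Measure Ω :=
  Measure.ofMeasurable (fun A _ => if IsSigmaFiniteSet μ A then 0 else ∞)
    (by simp [isSigmaFiniteSet_of_lt_top (μ := μ) .empty (by simp)])
    (fun A _ _ => by
      by_cases h : ∀ n, IsSigmaFiniteSet μ (A n)
      · simp [h, IsSigmaFiniteSet.iUnion h]
      · obtain ⟨n, hn⟩ := not_forall.1 h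
        rw [if_neg fun hU => hn (hU.mono (subset_iUnion A n))]
        exact (top_unique <| (if_neg hn).symm.trans_le (ENNReal.le_tsum n)).symm)

lemma infOnNonSigmaFinite_apply_of_isSigmaFiniteSet {A : Set Ω} (hAm : MeasurableSet A)
    (hA : IsSigmaFiniteSet μ A) : infOnNonSigmaFinite μ A = 0 := by
  rw [infOnNonSigmaFinite, Measure.ofMeasurable_apply A hAm, if_pos hA]

lemma infOnNonSigmaFinite_apply_of_not {A : Set Ω} (hAm : MeasurableSet A)
    (hA : ¬IsSigmaFiniteSet μ A) : infOnNonSigmaFinite μ A = ∞ := by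
  rw [infOnNonSigmaFinite, Measure.ofMeasurable_apply A hAm, if_neg hA]

lemma infOnNonSigmaFinite_apply_of_lt_top {A : Set Ω} (hAm : MeasurableSet A) (hμA : μ A < ∞) :
    infOnNonSigmaFinite μ A = 0 :=
  infOnNonSigmaFinite_apply_of_isSigmaFiniteSet hAm (isSigmaFiniteSet_of_lt_top hAm hμA)

lemma infOnNonSigmaFinite_add_self :
    infOnNonSigmaFinite μ + infOnNonSigmaFinite μ = infOnNonSigmaFinite μ := by
  ext A hAm
  by_cases hA : IsSigmaFiniteSet μ A
  · simp [infOnNonSigmaFinite_apply_of_isSigmaFiniteSet hAm hA]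
  · simp [infOnNonSigmaFinite_apply_of_not hAm hA]

lemma add_infOnNonSigmaFinite_le {m : Measure Ω} (hm : m ≤ μ) :
    m + infOnNonSigmaFinite μ ≤ μ := by
  refine Measure.le_iff.2 fun A hAm => ?_
  rcases lt_or_ge (μ A) ∞ with hμA | hμA
  · simpa [infOnNonSigmaFinite_apply_of_lt_top hAm hμA] using hm A
  · simp [top_le_iff.1 hμA]

lemma eq_add_infOnNonSigmaFinite {m : Measure Ω}
    (h : ∀ A, MeasurableSet A → μ A < ∞ → m A = μ A) : μ = m + infOnNonSigmaFinite μ := by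
  ext A hAm
  by_cases hA : IsSigmaFiniteSet μ A
  · simpa [infOnNonSigmaFinite_apply_of_isSigmaFiniteSet hAm hA] using
      (hA.measure_eq hAm fun B hB hμB => (h B hB hμB).symm)
  · have hμA : μ A = ∞ := not_lt_top_iff.1 fun hμA => hA (isSigmaFiniteSet_of_lt_top hAm hμA)
    simp [hμA, infOnNonSigmaFinite_apply_of_not hAm hA]

end Measures

namespace MeasureTheory.Lp

variable {Ω : Type*} [MeasurableSpace Ω] {μ : Measure Ω} {p : ℝ≥0∞}

lemma measurableSet_support (f : Lp ℝ p μ) : MeasurableSet (support f) :=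
  _root_.measurableSet_support (Lp.stronglyMeasurable f).measurable

lemma ae_eq_zero_iff_measure_support (m : Measure Ω) (f : Lp ℝ p μ) :
    (f : Ω → ℝ) =ᵐ[m] 0 ↔ m (support f) = 0 :=
  ae_iff

lemma inf_abs_eq_zero_iff (f g : Lp ℝ p μ) :
    |f| ⊓ |g| = 0 ↔ μ (support f ∩ support g) = 0 := by
  have hco : ⇑(|f| ⊓ |g|) =ᵐ[μ] fun x => |f x| ⊓ |g x| := by
    filter_upwards [Lp.coeFn_inf |f| |g|, Lp.coeFn_abs f, Lp.coeFn_abs g] with x h h₁ h₂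
    rw [h, Pi.inf_apply, h₁, h₂]
  have hset : {x | ¬(|f x| ⊓ |g x| = (0 : Ω → ℝ) x)} = support f ∩ support g := by
    ext x
    simp [abs_inf_abs_eq_zero_iff]
  rw [Lp.ext_iff, ← hset, ← ae_iff]
  exact ⟨fun h => hco.symm.trans (h.trans (Lp.coeFn_zero ℝ p μ)),
    fun h => hco.trans (EventuallyEq.trans h (Lp.coeFn_zero ℝ p μ).symm)⟩

lemma support_indicatorConstLp {s : Set Ω} (hs : MeasurableSet s) (hμs : μ s ≠ ∞) {c : ℝ}
    (hc : c ≠ 0) : support (indicatorConstLp p hs hμs c) =ᵐ[μ] s := by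
  filter_upwards [indicatorConstLp_coeFn (p := p) (hs := hs) (hμs := hμs) (c := c)] with x hx
  change (_ ≠ 0) = (x ∈ s)
  rw [hx]
  by_cases h : x ∈ s <;> simp [h, hc]

lemma isSigmaFiniteSet_support [Fact (1 ≤ p)] (hp : p ≠ ∞) (f : Lp ℝ p μ) :
    IsSigmaFiniteSet μ (support f) := by
  have hp0 : p ≠ 0 := (zero_lt_one.trans_le Fact.out).ne'
  refine ⟨fun n => {x | (n : ℝ≥0∞)⁻¹ ≤ ‖f x‖ₑ}, fun n => ⟨?_, ?_⟩, fun x hx => ?_⟩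
  · exact measurableSet_le measurable_const (Lp.stronglyMeasurable f).measurable.enorm
  · exact (Lp.memLp f).meas_ge_lt_top' hp0 hp (ENNReal.inv_ne_zero.2 (natCast_ne_top n))
  · obtain ⟨n, hn⟩ := ENNReal.exists_inv_nat_lt (enorm_ne_zero.2 hx)
    exact mem_iUnion.2 ⟨n, hn.le⟩

lemma isLUB_range_inf_nsmul_abs {f : Lp ℝ p μ} {b : ℕ → Lp ℝ p μ}
    (hf : support f ≤ᵐ[μ] ⋃ n, support (b n)) :
    IsLUB (range fun k : ℕ × ℕ => |f| ⊓ k.1 • |b k.2|) |f| := by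
  refine ⟨forall_mem_range.2 fun k => inf_le_left, fun u hu => ?_⟩
  have hcoe : ∀ k : ℕ × ℕ, ⇑(|f| ⊓ k.1 • |b k.2|) =ᵐ[μ] fun x => |f x| ⊓ k.1 * |b k.2 x| := by
    intro k
    rw [← Nat.cast_smul_eq_nsmul ℝ]
    filter_upwards [Lp.coeFn_inf |f| ((k.1 : ℝ) • |b k.2|), Lp.coeFn_abs f,
      Lp.coeFn_smul (k.1 : ℝ) |b k.2|, Lp.coeFn_abs (b k.2)] with x h h₁ h₂ h₃
    simp only [h, Pi.inf_apply, h₁, h₂, Pi.smul_apply, h₃, smul_eq_mul]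
  have hle : ∀ k : ℕ × ℕ, ∀ᵐ x ∂μ, |f x| ⊓ k.1 * |b k.2 x| ≤ u x := fun k => by
    filter_upwards [hcoe k, (Lp.coeFn_le _ _).2 (hu (mem_range_self k))] with x h h'
    rwa [← h]
  rw [← Lp.coeFn_le]
  filter_upwards [Lp.coeFn_abs f, ae_all_iff.2 hle, hf] with x hfx hle hsupp
  rw [hfx]
  by_cases h0 : f x = 0
  · simpa [h0] using hle (0, 0)
  · obtain ⟨m, hm⟩ := mem_iUnion.1 (hsupp h0)
    obtain ⟨n, hn⟩ := exists_nat_abs_le_mul_abs (f x) hm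
    simpa [inf_eq_left.2 hn] using hle (n, m)

def disjointComplement (N : Set (Lp ℝ p μ)) : Set (Lp ℝ p μ) := {f | ∀ g ∈ N, |f| ⊓ |g| = 0}

lemma mem_disjointComplement_iff {N : Set (Lp ℝ p μ)} {f : Lp ℝ p μ} :
    f ∈ disjointComplement N ↔ ∀ g ∈ N, μ (support f ∩ support g) = 0 :=
  forall₂_congr fun g _ => inf_abs_eq_zero_iff f g

variable (μ) in
noncomputable def supportMeasure (N : Set (Lp ℝ p μ)) : Measure Ω :=
  ⨆ f ∈ N, μ.restrict (support f)

lemma restrict_support_le_supportMeasure {N : Set (Lp ℝ p μ)} {f : Lp ℝ p μ} (hf : f ∈ N) :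
    μ.restrict (support f) ≤ supportMeasure μ N :=
  le_iSup₂ (f := fun f (_ : f ∈ N) => μ.restrict (support f)) f hf

lemma supportMeasure_le (N : Set (Lp ℝ p μ)) : supportMeasure μ N ≤ μ :=
  iSup₂_le fun _ _ => Measure.restrict_le_self

lemma supportMeasure_apply_eq_zero_iff {N : Set (Lp ℝ p μ)} {A : Set Ω} (hA : MeasurableSet A) :
    supportMeasure μ N A = 0 ↔ ∀ f ∈ N, μ (A ∩ support f) = 0 := by
  refine ⟨fun h f hf => ?_, fun h => ?_⟩
  · rw [← Measure.restrict_apply hA]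
    exact le_antisymm ((Measure.le_iff'.1 (restrict_support_le_supportMeasure hf) A).trans h.le)
      bot_le
  · have hle : supportMeasure μ N ≤ μ.restrict Aᶜ := iSup₂_le fun f hf =>
      Measure.restrict_mono_ae <| ae_le_set.2 <| by rw [sdiff_compl, inter_comm]; exact h f hf
    refine le_antisymm ((Measure.le_iff'.1 hle A).trans_eq ?_) bot_le
    rw [Measure.restrict_apply hA, inter_compl_self, measure_empty]

lemma supportMeasure_apply_of_ae_subset {N : Set (Lp ℝ p μ)} {A U : Set Ω} (hA : MeasurableSet A)
    (hUA : U ⊆ A) (hU : ∃ b ∈ N, support b =ᵐ[μ] U)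
    (hN : ∀ f ∈ N, (A ∩ support f : Set Ω) ≤ᵐ[μ] U) :
    supportMeasure μ N A = μ U := by
  obtain ⟨b, hb, hbU⟩ := hU
  refine le_antisymm ?_ ?_
  · have hle : supportMeasure μ N ≤ μ.restrict (U ∪ Aᶜ) := iSup₂_le fun f hf =>
      Measure.restrict_mono_ae <| by
        filter_upwards [hN f hf] with x hx hxf
        by_cases hxA : x ∈ A
        exacts [Or.inl (hx ⟨hxA, hxf⟩), Or.inr hxA]
    refine (Measure.le_iff'.1 hle A).trans_eq ?_
    rw [Measure.restrict_apply hA, inter_union_distrib_left, inter_compl_self, union_empty,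
      inter_eq_right.2 hUA]
  · calc μ U = μ.restrict (support b) A := by
          have hAb : (A ∩ support b : Set Ω) =ᵐ[μ] (A ∩ U : Set Ω) :=
            (EventuallyEq.refl _ A).inter hbU
          rw [Measure.restrict_apply hA, measure_congr hAb, inter_eq_right.2 hUA]
      _ ≤ supportMeasure μ N A := Measure.le_iff'.1 (restrict_support_le_supportMeasure hb) A

structure IsLocalCarrier (M : Set (Lp ℝ p μ)) (A U : Set Ω) : Prop where
  measurableSet : MeasurableSet U
  subset : U ⊆ A
  exists_mem : ∃ b ∈ M, support b =ᵐ[μ] U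
  ae_subset : ∀ f ∈ M, (A ∩ support f : Set Ω) ≤ᵐ[μ] U

namespace IsLocalCarrier

variable {M : Set (Lp ℝ p μ)} {A U : Set Ω}

lemma measure_sdiff_inter_support (hU : IsLocalCarrier M A U) {f : Lp ℝ p μ} (hf : f ∈ M) :
    μ (A \ U ∩ support f) = 0 := by
  rw [← inter_sdiff_right_comm]
  exact ae_le_set.1 (hU.ae_subset f hf)

lemma measure_inter_support (hU : IsLocalCarrier M A U) {g : Lp ℝ p μ}
    (hg : g ∈ disjointComplement M) : μ (U ∩ support g) = 0 := by
  obtain ⟨b, hb, hbU⟩ := hU.exists_mem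
  have hUg : (U ∩ support g : Set Ω) =ᵐ[μ] (support g ∩ support b : Set Ω) := by
    rw [inter_comm]; exact (EventuallyEq.refl _ _).inter hbU.symm
  rw [measure_congr hUg]
  exact mem_disjointComplement_iff.1 hg b hb

lemma exists_mem_disjointComplement (hU : IsLocalCarrier M A U) (hA : MeasurableSet A)
    (hμA : μ A ≠ ∞) : ∃ b ∈ disjointComplement M, support b =ᵐ[μ] (A \ U : Set Ω) := by
  have hAU : MeasurableSet (A \ U) := hA.diff hU.measurableSet
  have hμAU : μ (A \ U) ≠ ∞ := ne_top_of_le_ne_top hμA (measure_mono sdiff_subset)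
  have hb := support_indicatorConstLp (p := p) hAU hμAU one_ne_zero
  set b := indicatorConstLp p hAU hμAU (1 : ℝ)
  refine ⟨b, mem_disjointComplement_iff.2 fun f hf => ?_, hb⟩
  have hbf : (support b ∩ support f : Set Ω) =ᵐ[μ] (A \ U ∩ support f : Set Ω) :=
    hb.inter (EventuallyEq.refl _ _)
  rw [measure_congr hbf]
  exact hU.measure_sdiff_inter_support hf

lemma supportMeasure_apply (hU : IsLocalCarrier M A U) (hA : MeasurableSet A) :
    supportMeasure μ M A = μ U :=
  supportMeasure_apply_of_ae_subset hA hU.subset hU.exists_mem hU.ae_subset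

lemma supportMeasure_disjointComplement_apply (hU : IsLocalCarrier M A U) (hA : MeasurableSet A)
    (hμA : μ A ≠ ∞) : supportMeasure μ (disjointComplement M) A = μ (A \ U) :=
  supportMeasure_apply_of_ae_subset hA sdiff_subset (hU.exists_mem_disjointComplement hA hμA)
    fun g hg => ae_le_set.2 <| by
      refine measure_mono_null ?_ (hU.measure_inter_support hg)
      rintro x ⟨⟨hxA, hxg⟩, hxAU⟩
      exact ⟨not_not.1 fun hxU => hxAU ⟨hxA, hxU⟩, hxg⟩

lemma supportMeasure_sdiff (hU : IsLocalCarrier M A U) (hA : MeasurableSet A) :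
    supportMeasure μ M (A \ U) = 0 :=
  (supportMeasure_apply_eq_zero_iff (hA.diff hU.measurableSet)).2
    fun _ hf => hU.measure_sdiff_inter_support hf

lemma supportMeasure_disjointComplement (hU : IsLocalCarrier M A U) :
    supportMeasure μ (disjointComplement M) U = 0 :=
  (supportMeasure_apply_eq_zero_iff hU.measurableSet).2 fun _ hg => hU.measure_inter_support hg

end IsLocalCarrier

lemma setOf_ae_eq_zero_eq_disjointComplement [Fact (1 ≤ p)] (hp : p ≠ ∞) (N : Set (Lp ℝ p μ)) :
    {f : Lp ℝ p μ | (f : Ω → ℝ) =ᵐ[supportMeasure μ N + infOnNonSigmaFinite μ] 0} =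
      disjointComplement N := by
  ext f
  rw [mem_ofPred_eq, ae_eq_zero_iff_measure_support, Measure.add_apply,
    infOnNonSigmaFinite_apply_of_isSigmaFiniteSet (measurableSet_support f)
      (isSigmaFiniteSet_support hp f), add_zero, supportMeasure_apply_eq_zero_iff
      (measurableSet_support f), mem_disjointComplement_iff]

end MeasureTheory.Lp

namespace IsBand

open MeasureTheory.Lp

variable {Ω : Type*} [MeasurableSpace Ω] {μ : Measure Ω} {p : ℝ≥0∞} [Fact (1 ≤ p)]
  {M : Set (Lp ℝ p μ)}

lemma zero_mem (hM : IsBand M) : 0 ∈ M := hM.1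

lemma mem_of_abs_le (hM : IsBand M) {f g : Lp ℝ p μ} (hf : f ∈ M) (hgf : |g| ≤ |f|) : g ∈ M :=
  hM.2.2.2.1 f hf g hgf

lemma mem_of_isLUB (hM : IsBand M) {S : Set (Lp ℝ p μ)} (hS : S ⊆ M) {f : Lp ℝ p μ}
    (hf : IsLUB S f) : f ∈ M :=
  hM.2.2.2.2 S hS f hf

lemma abs_mem (hM : IsBand M) {f : Lp ℝ p μ} (hf : f ∈ M) : |f| ∈ M :=
  hM.mem_of_abs_le hf (abs_abs f).le

lemma nsmul_mem (hM : IsBand M) (n : ℕ) {f : Lp ℝ p μ} (hf : f ∈ M) : n • f ∈ M :=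
  Nat.cast_smul_eq_nsmul ℝ n f ▸ hM.2.2.1 n f hf

lemma mem_of_support_ae_subset (hM : IsBand M) {b : ℕ → Lp ℝ p μ} (hb : ∀ n, b n ∈ M)
    {f : Lp ℝ p μ} (hf : support f ≤ᵐ[μ] ⋃ n, support (b n)) : f ∈ M := by
  refine hM.mem_of_abs_le (hM.mem_of_isLUB ?_ (isLUB_range_inf_nsmul_abs hf)) (abs_abs f).ge
  rintro _ ⟨k, rfl⟩
  have hk : 0 ≤ k.1 • |b k.2| := nsmul_nonneg (abs_nonneg _) _
  refine hM.mem_of_abs_le (hM.nsmul_mem k.1 (hM.abs_mem (hb k.2))) ?_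
  rw [abs_of_nonneg (le_inf (abs_nonneg f) hk), abs_of_nonneg hk]
  exact inf_le_right

lemma exists_isLocalCarrier (hM : IsBand M) {A : Set Ω} (hA : MeasurableSet A) (hμA : μ A ≠ ∞) :
    ∃ U, IsLocalCarrier M A U := by
  set 𝒯 : Set (Set Ω) := {t | MeasurableSet t ∧ t ⊆ A ∧ ∃ b ∈ M, support b =ᵐ[μ] t}
  have h_mem : ∀ t, MeasurableSet t → t ⊆ A → ∀ b : ℕ → Lp ℝ p μ, (∀ n, b n ∈ M) →
      t ≤ᵐ[μ] ⋃ n, support (b n) → t ∈ 𝒯 := fun t ht htA b hb htb =>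
    have hμt : μ t ≠ ∞ := ne_top_of_le_ne_top hμA (measure_mono htA)
    have hsupp := support_indicatorConstLp (p := p) ht hμt one_ne_zero
    ⟨ht, htA, _, hM.mem_of_support_ae_subset hb (hsupp.le.trans htb), hsupp⟩
  have h_iUnion : ∀ t : ℕ → Set Ω, (∀ n, t n ∈ 𝒯) → ⋃ n, t n ∈ 𝒯 := fun t ht => by
    choose hmeas hsub b hb hbt using ht
    exact h_mem _ (.iUnion hmeas) (iUnion_subset hsub) b hb
      (Filter.EventuallyLE.countable_iUnion fun n => (hbt n).symm.le)
  obtain ⟨U, ⟨hU, hUA, hUM⟩, hU_max⟩ := exists_ae_greatest_of_iUnion_mem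
    ⟨∅, h_mem ∅ .empty (empty_subset A) _ (fun _ => hM.zero_mem) (empty_subset _).eventuallyLE⟩
    (fun t ht => ht.1) (fun t ht => ne_top_of_le_ne_top hμA (measure_mono ht.2.1)) h_iUnion
  refine ⟨U, ⟨hU, hUA, hUM, fun f hf => hU_max _ ?_⟩⟩
  exact h_mem _ (hA.inter (measurableSet_support f)) inter_subset_left (fun _ => f) (fun _ => hf)
    (inter_subset_right.trans (subset_iUnion (fun _ : ℕ => support f) 0)).eventuallyLE

lemma disjointComplement_disjointComplement (hM : IsBand M) (hp : p ≠ ∞) :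
    disjointComplement (disjointComplement M) = M := by
  refine Subset.antisymm (fun f hf => ?_) fun f hf g hg => inf_comm |f| |g| ▸ hg f hf
  obtain ⟨s, hs, hfs⟩ := isSigmaFiniteSet_support hp f
  choose U hU using fun n => hM.exists_isLocalCarrier (hs n).1 (hs n).2.ne
  choose b hb hbU using fun n => (hU n).exists_mem
  choose b' hb' hb'U using fun n => (hU n).exists_mem_disjointComplement (hs n).1 (hs n).2.ne
  have hnull : ∀ n, ∀ᵐ x ∂μ, x ∈ support f → x ∈ s n → x ∈ U n := fun n => by
    have h0 := mem_disjointComplement_iff.1 hf (b' n) (hb' n)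
    rw [measure_congr ((EventuallyEq.refl _ (support f)).inter (hb'U n))] at h0
    filter_upwards [measure_eq_zero_iff_ae_notMem.1 h0] with x hx hxf hxs
    by_contra hxU
    exact hx ⟨hxf, hxs, hxU⟩
  refine hM.mem_of_support_ae_subset hb ?_
  filter_upwards [ae_all_iff.2 hnull, ae_all_iff.2 fun n => (hbU n).mem_iff] with x hxU hbx hxf
  obtain ⟨n, hn⟩ := mem_iUnion.1 (hfs hxf)
  exact mem_iUnion.2 ⟨n, (hbx n).2 (hxU n hxf hn)⟩

lemma locallyDisjoint (hM : IsBand M) :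
    LocallyDisjoint μ (supportMeasure μ M + infOnNonSigmaFinite μ)
      (supportMeasure μ (disjointComplement M) + infOnNonSigmaFinite μ) := by
  refine ⟨add_infOnNonSigmaFinite_le (supportMeasure_le _),
    add_infOnNonSigmaFinite_le (supportMeasure_le _), fun A hA hμA => ?_⟩
  obtain ⟨U, hU⟩ := hM.exists_isLocalCarrier hA hμA.ne
  have hAU : MeasurableSet (A \ U) := hA.diff hU.measurableSet
  refine ⟨U, A \ U, hU.measurableSet, hAU, (union_sdiff_cancel hU.subset).symm,
    disjoint_sdiff_right, ?_, ?_⟩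
  · rw [Measure.add_apply, hU.supportMeasure_sdiff hA, infOnNonSigmaFinite_apply_of_lt_top hAU
      ((measure_mono sdiff_subset).trans_lt hμA), add_zero]
  · rw [Measure.add_apply, hU.supportMeasure_disjointComplement,
      infOnNonSigmaFinite_apply_of_lt_top hU.measurableSet
      ((measure_mono hU.subset).trans_lt hμA), add_zero]

lemma supportMeasure_add_supportMeasure_disjointComplement (hM : IsBand M) :
    supportMeasure μ M + supportMeasure μ (disjointComplement M) + infOnNonSigmaFinite μ = μ := by
  refine (eq_add_infOnNonSigmaFinite fun A hA hμA => ?_).symm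
  obtain ⟨U, hU⟩ := hM.exists_isLocalCarrier hA hμA.ne
  rw [Measure.add_apply, hU.supportMeasure_apply hA,
    hU.supportMeasure_disjointComplement_apply hA hμA.ne,
    measure_add_sdiff hU.measurableSet.nullMeasurableSet, union_eq_right.2 hU.subset]

end IsBand

open MeasureTheory.Lp

/-- Theorem (main theorem, part (b)): every band `M` in `L_p(μ)` (`1 ≤ p < ∞`) arises
from a locally disjoint decomposition `μ = μ' + μ''` via
`M = {f : f = 0 μ''-a.e.}`, `M^⊥ = {f : f = 0 μ'-a.e.}`; moreover `μ'` and `μ''` can be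
chosen to give measure `∞` to every non-σ-finite measurable set. -/
theorem band_gives_locally_disjoint_decomposition {Ω : Type*} [MeasurableSpace Ω]
    (μ : Measure Ω) (p : ℝ≥0∞) [Fact (1 ≤ p)] (hp' : p ≠ ∞)
    (M : Set (Lp ℝ p μ)) (hM : IsBand M) :
    ∃ μ' μ'' : Measure Ω, μ = μ' + μ'' ∧ LocallyDisjoint μ μ' μ'' ∧
      M = {f : Lp ℝ p μ | (f : Ω → ℝ) =ᵐ[μ''] 0} ∧
      {f : Lp ℝ p μ | ∀ g ∈ M, |f| ⊓ |g| = 0} = {f : Lp ℝ p μ | (f : Ω → ℝ) =ᵐ[μ'] 0} ∧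
      ∀ A : Set Ω, MeasurableSet A →
        ¬(∃ s : ℕ → Set Ω, (∀ n, MeasurableSet (s n) ∧ μ (s n) < ∞) ∧ A ⊆ ⋃ n, s n) →
        μ' A = ∞ ∧ μ'' A = ∞ := by
  refine ⟨supportMeasure μ M + infOnNonSigmaFinite μ,
    supportMeasure μ (disjointComplement M) + infOnNonSigmaFinite μ, ?_, hM.locallyDisjoint,
    ?_, (setOf_ae_eq_zero_eq_disjointComplement hp' M).symm, fun A hA hA' => ?_⟩
  · rw [add_add_add_comm, infOnNonSigmaFinite_add_self,
      hM.supportMeasure_add_supportMeasure_disjointComplement]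
  · rw [setOf_ae_eq_zero_eq_disjointComplement hp', hM.disjointComplement_disjointComplement hp']
  · simp [infOnNonSigmaFinite_apply_of_not hA hA']
end

section
/- Let Ω = (0,1) × Γ with Γ a set of cardinality greater than the continuum, 𝒜 the σ-algebra of sets A ⊆ Ω whose vertical sections A_x ⊆ Γ are countable or co-countable and whose horizontal sections A^γ ⊆ (0,1) are Borel, μ'(A) = Σ_{x∈(0,1)} ν(A_x) and μ''(A) = Σ_{γ∈Γ} λ(A^γ), where ν is the 0–1 countable/co-countable measure on Γ and λ is Lebesgue measure. Then μ' and μ'' are locally disjoint with respect to μ := μ' + μ'': for every A ∈ 𝒜 with μ(A) < ∞, the set I' := {x ∈ (0,1) : Γ \ A_x countable} is finite, and A' := A ∩ (I' × Γ) satisfies μ''(A') = 0 and μ'(A \ A') = 0. -/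
/-!
A point `x` whose vertical section `A_x` is co-countable contributes `ν(A_x) = 1` to
`μ'(A) < ∞`, because `|Γ| > 𝔠` makes co-countable subsets of `Γ` uncountable; hence there are
only finitely many such `x`. The horizontal sections of `A'` then lie in this finite set and are
Lebesgue-null, while every vertical section of `A \ A'` is countable and so `ν`-null.
-/

open MeasureTheory Set ENNReal Cardinal

theorem Set.not_countable_of_countable_compl {α : Type*} [Uncountable α] {s : Set α}
    (h : sᶜ.Countable) : ¬s.Countable :=
  fun hs => not_countable_univ (by simpa using hs.union h)

theorem fremlin_locally_disjoint_general {Γ : Type*} (hΓ : Cardinal.continuum < #Γ)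
    (ν : Set Γ → ℝ≥0∞) (hν0 : ∀ G : Set Γ, G.Countable → ν G = 0)
    (hν1 : ∀ G : Set Γ, ¬G.Countable → ν G = 1)
    (μ' μ'' : Set (↥(Set.Ioo (0:ℝ) 1) × Γ) → ℝ≥0∞)
    (hμ' : ∀ A : Set (↥(Set.Ioo (0:ℝ) 1) × Γ),
      μ' A = ∑' x : ↥(Set.Ioo (0:ℝ) 1), ν {γ : Γ | (x, γ) ∈ A})
    (hμ'' : ∀ A : Set (↥(Set.Ioo (0:ℝ) 1) × Γ),
      μ'' A = ∑' γ : Γ,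
        volume ((fun x : ↥(Set.Ioo (0:ℝ) 1) => (x : ℝ)) '' {x | (x, γ) ∈ A}))
    (A : Set (↥(Set.Ioo (0:ℝ) 1) × Γ))
    (hsecV : ∀ x : ↥(Set.Ioo (0:ℝ) 1),
      {γ : Γ | (x, γ) ∈ A}.Countable ∨ ({γ : Γ | (x, γ) ∈ A}ᶜ : Set Γ).Countable)
    (hfin : μ' A + μ'' A < ∞) :
    {x : ↥(Set.Ioo (0:ℝ) 1) | ({γ : Γ | (x, γ) ∈ A}ᶜ : Set Γ).Countable}.Finite ∧
    μ'' (A ∩ {p : ↥(Set.Ioo (0:ℝ) 1) × Γ |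
      ({γ : Γ | (p.1, γ) ∈ A}ᶜ : Set Γ).Countable}) = 0 ∧
    μ' (A \ {p : ↥(Set.Ioo (0:ℝ) 1) × Γ |
      ({γ : Γ | (p.1, γ) ∈ A}ᶜ : Set Γ).Countable}) = 0 := by
  have : Uncountable Γ := aleph0_lt_mk_iff.mp (aleph0_le_continuum.trans_lt hΓ)
  set I' := {x : ↥(Set.Ioo (0:ℝ) 1) | ({γ : Γ | (x, γ) ∈ A}ᶜ : Set Γ).Countable}
  have hI' : I'.Finite := by
    have hsum : ∑' x, ν {γ | (x, γ) ∈ A} ≠ ∞ := hμ' A ▸ (le_self_add.trans_lt hfin).ne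
    exact (ENNReal.finite_const_le_of_tsum_ne_top hsum one_ne_zero).subset fun x hx =>
      (hν1 _ (not_countable_of_countable_compl hx)).ge
  refine ⟨hI', ?_, ?_⟩
  · rw [hμ'', ENNReal.tsum_eq_zero]
    exact fun γ => measure_mono_null (image_mono fun x hx => hx.2) ((hI'.image _).measure_zero _)
  · rw [hμ', ENNReal.tsum_eq_zero]
    intro x
    refine hν0 _ ?_
    by_cases hx : x ∈ I'
    · exact countable_empty.mono fun γ hγ => hγ.2 hx
    · exact ((hsecV x).resolve_right hx).mono fun γ hγ => hγ.1

/-- In Fremlin's example `Ω = (0,1) × Γ` (with `|Γ| > 𝔠`), the measures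
`μ'(A) = Σ_x ν(A_x)` and `μ''(A) = Σ_γ λ(A^γ)` are locally disjoint with respect to
`μ = μ' + μ''`: for every `A ∈ 𝒜` with `μ(A) < ∞`, the set
`I' = {x : Γ \ A_x countable}` is finite, and `A' = A ∩ (I' × Γ)` satisfies
`μ''(A') = 0` and `μ'(A \ A') = 0`. -/
theorem fremlin_locally_disjoint {Γ : Type*} (hΓ : Cardinal.continuum < #Γ)
    (ν : Set Γ → ℝ≥0∞) (hν0 : ∀ G : Set Γ, G.Countable → ν G = 0)
    (hν1 : ∀ G : Set Γ, ¬G.Countable → ν G = 1)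
    (μ' μ'' : Set (↥(Set.Ioo (0:ℝ) 1) × Γ) → ℝ≥0∞)
    (hμ' : ∀ A : Set (↥(Set.Ioo (0:ℝ) 1) × Γ),
      μ' A = ∑' x : ↥(Set.Ioo (0:ℝ) 1), ν {γ : Γ | (x, γ) ∈ A})
    (hμ'' : ∀ A : Set (↥(Set.Ioo (0:ℝ) 1) × Γ),
      μ'' A = ∑' γ : Γ,
        volume ((fun x : ↥(Set.Ioo (0:ℝ) 1) => (x : ℝ)) '' {x | (x, γ) ∈ A}))
    (A : Set (↥(Set.Ioo (0:ℝ) 1) × Γ))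
    (hsecV : ∀ x : ↥(Set.Ioo (0:ℝ) 1),
      {γ : Γ | (x, γ) ∈ A}.Countable ∨ ({γ : Γ | (x, γ) ∈ A}ᶜ : Set Γ).Countable)
    (hsecH : ∀ γ : Γ, MeasurableSet {x : ↥(Set.Ioo (0:ℝ) 1) | (x, γ) ∈ A})
    (hfin : μ' A + μ'' A < ∞) :
    {x : ↥(Set.Ioo (0:ℝ) 1) | ({γ : Γ | (x, γ) ∈ A}ᶜ : Set Γ).Countable}.Finite ∧
    μ'' (A ∩ {p : ↥(Set.Ioo (0:ℝ) 1) × Γ |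
      ({γ : Γ | (p.1, γ) ∈ A}ᶜ : Set Γ).Countable}) = 0 ∧
    μ' (A \ {p : ↥(Set.Ioo (0:ℝ) 1) × Γ |
      ({γ : Γ | (p.1, γ) ∈ A}ᶜ : Set Γ).Countable}) = 0 :=
  fremlin_locally_disjoint_general hΓ ν hν0 hν1 μ' μ'' hμ' hμ'' A hsecV hfin
end

section
/- Let W : (0,1) → [0,∞) be Borel measurable with ∫_U W = ∞ for every nonempty open U ⊆ (0,1). Let (T''(t)) be the right translation semigroup on L_p(0,1) (with functions extended by 0), and for n ∈ ℕ let T''_{W∧n}(t)f(x) = exp(−∫_{x−t}^x (W∧n)(s) ds) f(x−t). Then for every t > 0 and f ∈ L_p(0,1), the strong limit lim_{n→∞} T''_{W∧n}(t)f = 0. -/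
open MeasureTheory Set ENNReal Filter Topology

/-! Every damping factor `exp (-∫_{x-t}^x W ∧ n)` lies in `[0, 1]`, so the functions are dominated
by `|f (· - t)| ∈ L_p`. At `x ∈ (0, 1)` either `x - t ∉ (0, 1)` and `f (x - t) = 0`, or
`(x - t, x) ⊆ (0, 1)`, and by monotone convergence `∫_{x-t}^x W ∧ n → ∫_{x-t}^x W = ∞`, so the
damping factor tends to `0`. Dominated convergence in `L_p` concludes. -/

section Truncation

variable {α : Type*} [MeasurableSpace α] {μ : Measure α} {W : α → ℝ}

theorem integrable_min_natCast [IsFiniteMeasure μ] (hW : Measurable W) (hW0 : ∀ x, 0 ≤ W x)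
    (n : ℕ) : Integrable (fun x => min (W x) n) μ :=
  .of_bound (hW.min measurable_const).aestronglyMeasurable n <| .of_forall fun x => by
    rw [Real.norm_of_nonneg (le_min (hW0 x) n.cast_nonneg)]
    exact min_le_right _ _

theorem tendsto_integral_min_natCast_atTop [IsFiniteMeasure μ] (hW : Measurable W)
    (hW0 : ∀ x, 0 ≤ W x) (hWinf : ∫⁻ x, ENNReal.ofReal (W x) ∂μ = ∞) :
    Tendsto (fun n : ℕ => ∫ x, min (W x) n ∂μ) atTop atTop := by
  rw [← ENNReal.tendsto_ofReal_nhds_top, ← hWinf]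
  simp_rw [ofReal_integral_eq_lintegral_ofReal (integrable_min_natCast hW hW0 _)
    (.of_forall fun x => le_min (hW0 x) (Nat.cast_nonneg _))]
  refine lintegral_tendsto_of_tendsto_of_monotone
    (fun n => (hW.min measurable_const).ennreal_ofReal.aemeasurable)
    (.of_forall fun x m n hmn =>
      ENNReal.ofReal_le_ofReal (min_le_min_left _ (by exact_mod_cast hmn)))
    (.of_forall fun x => ?_)
  refine tendsto_const_nhds.congr' ?_
  filter_upwards [eventually_ge_atTop ⌈W x⌉₊] with n hn
  rw [min_eq_left ((Nat.le_ceil _).trans (by exact_mod_cast hn))]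

end Truncation

theorem continuous_setIntegral_Ioc_sub {E : Type*} [NormedAddCommGroup E] [NormedSpace ℝ E]
    {h : ℝ → E} (hh : ∀ a b, IntervalIntegrable h volume a b) {t : ℝ} (ht : 0 ≤ t) :
    Continuous fun x => ∫ s in Ioc (x - t) x, h s := by
  have hF := intervalIntegral.continuous_primitive hh 0
  convert hF.sub (hF.comp (continuous_sub_right t)) using 1
  ext x
  rw [Pi.sub_apply, Function.comp_apply,
    intervalIntegral.integral_interval_sub_left (hh 0 x) (hh 0 (x - t)),
    intervalIntegral.integral_of_le (by linarith)]

theorem tendsto_eLpNorm_zero_of_dominated {α E : Type*} [MeasurableSpace α]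
    [NormedAddCommGroup E] {μ : Measure α} {p : ℝ≥0∞} (hp0 : p ≠ 0) (hp : p ≠ ∞)
    {F : ℕ → α → E} {g : α → ℝ} (hF : ∀ n, AEStronglyMeasurable (F n) μ) (hg : MemLp g p μ)
    (hFg : ∀ n, ∀ᵐ x ∂μ, ‖F n x‖ ≤ g x)
    (hlim : ∀ᵐ x ∂μ, Tendsto (fun n => F n x) atTop (𝓝 0)) :
    Tendsto (fun n => eLpNorm (F n) p μ) atTop (𝓝 0) := by
  have hq : 0 < p.toReal := ENNReal.toReal_pos hp0 hp
  have hint : Tendsto (fun n => ∫⁻ x, ‖F n x‖ₑ ^ p.toReal ∂μ) atTop (𝓝 0) := by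
    simpa using tendsto_lintegral_of_dominated_convergence' (f := fun _ => 0)
      (fun x => ‖g x‖ₑ ^ p.toReal) (fun n => (hF n).enorm.pow_const _)
      (fun n => (hFg n).mono fun x hx => ENNReal.rpow_le_rpow
        (enorm_le_iff_norm_le.2 (hx.trans (le_abs_self _))) hq.le)
      (lintegral_rpow_enorm_lt_top_of_eLpNorm_lt_top hp0 hp hg.2).ne
      (hlim.mono fun x hx => by
        simpa [ENNReal.zero_rpow_of_pos hq] using hx.enorm.ennrpow_const p.toReal)
  simp_rw [eLpNorm_eq_lintegral_rpow_enorm_toReal hp0 hp]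
  simpa [ENNReal.zero_rpow_of_pos (inv_pos.2 hq)] using hint.ennrpow_const (1 / p.toReal)

/-- Let `W : (0,1) → [0,∞)` be Borel measurable with `∫_U W = ∞` for every nonempty open
`U ⊆ (0,1)`. Then for every `t > 0` and `f ∈ L_p(0,1)` (extended by `0` outside `(0,1)`),
the functions `T''_{W∧n}(t)f : x ↦ exp(−∫_{x−t}^x (W∧n)) f(x−t)` tend to `0` in
`L_p(0,1)` as `n → ∞`. -/
theorem absorption_translation_tendsto_zero (p : ℝ≥0∞) (hp : 1 ≤ p) (hp' : p ≠ ∞)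
    (W : ℝ → ℝ) (hWmeas : Measurable W) (hWpos : ∀ x, 0 ≤ W x)
    (hWsing : ∀ U : Set ℝ, IsOpen U → U.Nonempty → U ⊆ Set.Ioo 0 1 →
      ∫⁻ x in U, ENNReal.ofReal (W x) = ∞)
    (t : ℝ) (ht : 0 < t) (f : ℝ → ℝ)
    (hf : MemLp f p (volume.restrict (Set.Ioo 0 1)))
    (hf0 : ∀ x, x ∉ Set.Ioo (0:ℝ) 1 → f x = 0) :
    Tendsto
      (fun n : ℕ => eLpNorm
        (fun x => Real.exp (-∫ s in Set.Ioc (x - t) x, min (W s) (n : ℝ)) * f (x - t))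
        p (volume.restrict (Set.Ioo 0 1)))
      atTop (nhds 0) := by
  have hfR : MemLp f p volume := by
    rw [← indicator_eq_self.2 fun x hx => not_imp_comm.1 (hf0 x) hx]
    exact (memLp_indicator_iff_restrict measurableSet_Ioo).2 hf
  have hfT : MemLp (fun x => f (x - t)) p volume :=
    hfR.comp_measurePreserving (measurePreserving_sub_right volume t)
  have hexponent_nonneg (n : ℕ) (x : ℝ) : 0 ≤ ∫ s in Ioc (x - t) x, min (W s) (n : ℝ) :=
    setIntegral_nonneg measurableSet_Ioc fun s _ => le_min (hWpos s) n.cast_nonneg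
  refine tendsto_eLpNorm_zero_of_dominated (zero_lt_one.trans_le hp).ne' hp'
    (g := fun x => ‖f (x - t)‖) (fun n => ?_) (hfT.norm.restrict _)
    (fun n => .of_forall fun x => ?_) ?_
  · exact ((continuous_setIntegral_Ioc_sub (fun a b => ⟨integrable_min_natCast hWmeas hWpos n,
      integrable_min_natCast hWmeas hWpos n⟩) ht.le).neg.rexp.aestronglyMeasurable).mul
      hfT.1.restrict
  · rw [norm_mul, Real.norm_of_nonneg (Real.exp_nonneg _)]
    exact mul_le_of_le_one_left (norm_nonneg _)
      (Real.exp_le_one_iff.2 (neg_nonpos.2 (hexponent_nonneg n x)))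
  filter_upwards [ae_restrict_mem measurableSet_Ioo] with x hx
  by_cases hxt : x - t ∈ Ioo (0 : ℝ) 1
  · have hWinf : ∫⁻ s in Ioc (x - t) x, ENNReal.ofReal (W s) = ∞ :=
      eq_top_mono (lintegral_mono_set Ioo_subset_Ioc_self) <| hWsing _ isOpen_Ioo
        (nonempty_Ioo.2 (by linarith)) fun y hy => ⟨hxt.1.trans hy.1, hy.2.trans hx.2⟩
    simpa using (Real.tendsto_exp_atBot.comp (tendsto_neg_atTop_atBot.comp
      (tendsto_integral_min_natCast_atTop hWmeas hWpos hWinf))).mul_const (f (x - t))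
  · simp [hf0 _ hxt]
end
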